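/- arXiv:2008.03934 — 11 statements merged into one kernel-verified Lean document; each statement's English description precedes it below -/
import Mathlib

section
/- Let ε > 0, g : ℕ → ℕ, and define g̃(n) := n + g(n). Let K := g̃^(⌈1/ε⌉+1)(0) (the (⌈1/ε⌉+1)-fold iterate of g̃ applied to 0), and let (a_i)_{i=0}^{K} be a finite monotone sequence in [0,1]. Then there exists N ≤ g̃^(⌈1/ε⌉)(0) with N + g(N) ≤ K such that for all i, j ∈ [N, N+g(N)], |a_i − a_j| ≤ ε. -/
/-!
Along the orbit `x k = g̃^[k] n` the `m + 1` increments `a (x (k + 1)) - a (x k)` of a monotone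
sequence telescope to `a (x (m + 1)) - a (x 0)`, so if that total is at most `(m + 1) ε` one
increment is at most `ε`. Monotonicity then confines `a` on the whole window
`[x k, x k + g (x k)] = [x k, x (k + 1)]` to an interval of length `ε`. The antitone case is the
monotone one for `-a`, and for `a` with values in `[0, 1]` the choice `m = ⌈1/ε⌉` makes the total
at most `1 ≤ m ε`.
-/

open Set

lemma exists_succ_sub_le_of_sub_le_mul (b : ℕ → ℝ) {ε : ℝ} {m : ℕ}
    (h : b (m + 1) - b 0 ≤ (m + 1) * ε) : ∃ k ≤ m, b (k + 1) - b k ≤ ε := by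
  by_contra! hgap
  have htelescope : ∑ k ∈ Finset.range (m + 1), (b (k + 1) - b k) = b (m + 1) - b 0 :=
    Finset.sum_range_sub b (m + 1)
  have hsum : ∑ _k ∈ Finset.range (m + 1), ε < ∑ k ∈ Finset.range (m + 1), (b (k + 1) - b k) :=
    Finset.sum_lt_sum_of_nonempty Finset.nonempty_range_add_one
      fun k hk => hgap k (Nat.lt_succ_iff.mp (Finset.mem_range.mp hk))
  simp only [Finset.sum_const, Finset.card_range, nsmul_eq_mul, Nat.cast_add,
    Nat.cast_one] at hsum
  linarith

lemma monotone_iterate_add_self (g : ℕ → ℕ) (n : ℕ) :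
    Monotone fun k => (fun n => n + g n)^[k] n :=
  fun _ _ hkl => Function.monotone_iterate_of_id_le (fun n => Nat.le_add_right n (g n)) hkl n

lemma exists_iterate_window_of_monotoneOn {ε : ℝ} {g : ℕ → ℕ} {a : ℕ → ℝ} {n m : ℕ}
    (hmono : MonotoneOn a (Iic ((fun n => n + g n)^[m + 1] n)))
    (hrange : a ((fun n => n + g n)^[m + 1] n) - a n ≤ (m + 1) * ε) :
    ∃ N ≤ (fun n => n + g n)^[m] n, N + g N ≤ (fun n => n + g n)^[m + 1] n ∧
      ∀ i, N ≤ i → i ≤ N + g N → ∀ j, N ≤ j → j ≤ N + g N → |a i - a j| ≤ ε := by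
  set x : ℕ → ℕ := fun k => (fun n => n + g n)^[k] n
  have hx : Monotone x := monotone_iterate_add_self g n
  have hxsucc : ∀ k, x (k + 1) = x k + g (x k) := fun k => Function.iterate_succ_apply' _ k n
  obtain ⟨k, hkm, hk⟩ := exists_succ_sub_le_of_sub_le_mul (a ∘ x) hrange
  have hwindow : Icc (x k) (x (k + 1)) ⊆ Iic (x (m + 1)) :=
    fun i hi => hi.2.trans (hx (Nat.succ_le_succ hkm))
  have hleft : x k ∈ Iic (x (m + 1)) := hwindow (left_mem_Icc.mpr (hx k.le_succ))
  have hright : x (k + 1) ∈ Iic (x (m + 1)) := hwindow (right_mem_Icc.mpr (hx k.le_succ))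
  have hbounds : ∀ i ∈ Icc (x k) (x (k + 1)), a i ∈ Icc (a (x k)) (a (x (k + 1))) :=
    fun i hi => ⟨hmono hleft (hwindow hi) hi.1, hmono (hwindow hi) hright hi.2⟩
  refine ⟨x k, hx hkm, (hxsucc k).symm ▸ hx (Nat.succ_le_succ hkm), ?_⟩
  intro i hi₁ hi₂ j hj₁ hj₂
  rw [← hxsucc] at hi₂ hj₂
  exact (Real.dist_le_of_mem_Icc (hbounds i ⟨hi₁, hi₂⟩) (hbounds j ⟨hj₁, hj₂⟩)).trans hk

lemma one_le_natCeil_one_div_mul {ε : ℝ} (hε : 0 < ε) : 1 ≤ (⌈1 / ε⌉₊ : ℝ) * ε := by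
  calc (1 : ℝ) = 1 / ε * ε := (one_div_mul_cancel hε.ne').symm
    _ ≤ ⌈1 / ε⌉₊ * ε := mul_le_mul_of_nonneg_right (Nat.le_ceil _) hε.le

theorem finite_monotone_convergence_principle
    (ε : ℝ) (hε : 0 < ε) (g : ℕ → ℕ) (a : ℕ → ℝ)
    (K : ℕ) (hK : K = (fun n => n + g n)^[⌈1/ε⌉₊ + 1] 0)
    (ha : ∀ i ≤ K, a i ∈ Set.Icc (0:ℝ) 1)
    (hmono : (∀ i j, i ≤ j → j ≤ K → a i ≤ a j) ∨ (∀ i j, i ≤ j → j ≤ K → a j ≤ a i)) :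
    ∃ N ≤ (fun n => n + g n)^[⌈1/ε⌉₊] 0, N + g N ≤ K ∧
      ∀ i, N ≤ i → i ≤ N + g N → ∀ j, N ≤ j → j ≤ N + g N → |a i - a j| ≤ ε := by
  subst hK
  have hbudget := one_le_natCeil_one_div_mul hε
  have ha₀ := ha 0 (Nat.zero_le _)
  have haK := ha _ le_rfl
  generalize ⌈1 / ε⌉₊ = m at hbudget haK hmono ⊢
  rcases hmono with hmono | hanti
  · exact exists_iterate_window_of_monotoneOn (fun i _ j hj hij => hmono i j hij hj)
      (by linarith [haK.2, ha₀.1])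
  · obtain ⟨N, hN, hNK, hwindow⟩ := exists_iterate_window_of_monotoneOn (a := -a)
      (fun i _ j hj hij => neg_le_neg (hanti i j hij hj))
      (by simp only [Pi.neg_apply]; linarith [haK.1, ha₀.2])
    refine ⟨N, hN, hNK, fun i hi₁ hi₂ j hj₁ hj₂ => ?_⟩
    rw [abs_sub_comm, ← neg_sub_neg]
    exact hwindow i hi₁ hi₂ j hj₁ hj₂
end

section
/- Let (a_n) be a monotone sequence of reals in [0,1]. Then for every ε > 0 and every g : ℕ → ℕ there exists N ≤ g̃^(⌈1/ε⌉)(0) such that for all i, j ∈ [N, N+g(N)], |a_i − a_j| ≤ ε. -/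
/-!
Follow the orbit `0 = x₀ ≤ x₁ ≤ ⋯ ≤ x_K` of `n ↦ n + g n`, with `K = ⌈1/ε⌉`. For monotone `a` the
`K` increments `a x_{k+1} - a x_k` telescope to at most `1 ≤ K ε`, so one of them is at most `ε`,
and `[x_k, x_k + g x_k] = [x_k, x_{k+1}]` is then an interval on which `a` varies by at most `ε`.
The antitone case reduces to the monotone one through `-a`.
-/

theorem exists_lt_sub_le_of_sub_le {u : ℕ → ℝ} {K : ℕ} {ε : ℝ} (hK : 0 < K)
    (h : u K - u 0 ≤ K * ε) : ∃ k < K, u (k + 1) - u k ≤ ε := by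
  by_contra! hlt
  have hsum : ∑ _k ∈ Finset.range K, ε < ∑ k ∈ Finset.range K, (u (k + 1) - u k) :=
    Finset.sum_lt_sum_of_nonempty (Finset.nonempty_range_iff.mpr hK.ne')
      fun k hk => hlt k (Finset.mem_range.mp hk)
  rw [Finset.sum_range_sub, Finset.sum_const, Finset.card_range, nsmul_eq_mul] at hsum
  linarith

theorem Monotone.abs_sub_le_of_mem_Icc {α : Type*} [Preorder α] {a : α → ℝ} (ha : Monotone a)
    {p q i j : α} (hi : i ∈ Set.Icc p q) (hj : j ∈ Set.Icc p q) : |a i - a j| ≤ a q - a p := by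
  have := ha hi.1; have := ha hi.2; have := ha hj.1; have := ha hj.2
  rw [abs_sub_le_iff]
  constructor <;> linarith

theorem Monotone.exists_metastable {a : ℕ → ℝ} (ha : Monotone a) (hosc : ∀ m n, a m - a n ≤ 1)
    {ε : ℝ} (hε : 0 < ε) (g : ℕ → ℕ) :
    ∃ N ≤ (fun n => n + g n)^[⌈1/ε⌉₊] 0,
      ∀ i, N ≤ i → i ≤ N + g N → ∀ j, N ≤ j → j ≤ N + g N → |a i - a j| ≤ ε := by
  set F := fun n => n + g n
  set K := ⌈1/ε⌉₊
  have hK : 0 < K := Nat.ceil_pos.mpr (by positivity)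
  have horbit : Monotone fun k => F^[k] 0 :=
    fun m n hmn => Function.monotone_iterate_of_id_le (fun n => Nat.le_add_right n (g n)) hmn 0
  have htotal : a (F^[K] 0) - a (F^[0] 0) ≤ K * ε := calc
    _ ≤ 1 := hosc _ _
    _ = 1 / ε * ε := by field_simp
    _ ≤ K * ε := by gcongr; exact Nat.le_ceil _
  obtain ⟨k, hk, hstep⟩ := exists_lt_sub_le_of_sub_le (u := fun k => a (F^[k] 0)) hK htotal
  have hnext : F^[k] 0 + g (F^[k] 0) = F^[k + 1] 0 := (Function.iterate_succ_apply' F k 0).symm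
  refine ⟨F^[k] 0, horbit hk.le, fun i hi hi' j hj hj' => ?_⟩
  rw [hnext] at hi' hj'
  exact (ha.abs_sub_le_of_mem_Icc ⟨hi, hi'⟩ ⟨hj, hj'⟩).trans hstep

theorem metastable_monotone_convergence
    (a : ℕ → ℝ) (ha : ∀ n, a n ∈ Set.Icc (0:ℝ) 1)
    (hmono : Monotone a ∨ Antitone a)
    (ε : ℝ) (hε : 0 < ε) (g : ℕ → ℕ) :
    ∃ N ≤ (fun n => n + g n)^[⌈1/ε⌉₊] 0,
      ∀ i, N ≤ i → i ≤ N + g N → ∀ j, N ≤ j → j ≤ N + g N → |a i - a j| ≤ ε := by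
  have hosc : ∀ m n, a m - a n ≤ 1 := fun m n => by linarith [(ha m).2, (ha n).1]
  rcases hmono with hmono | hanti
  · exact hmono.exists_metastable hosc hε g
  · obtain ⟨N, hN, hsmall⟩ :=
      hanti.neg.exists_metastable (fun m n => by linarith [hosc n m]) hε g
    refine ⟨N, hN, fun i hi hi' j hj hj' => ?_⟩
    simpa only [Pi.neg_apply, neg_sub_neg, abs_sub_comm] using hsmall i hi hi' j hj hj'
end

section
/- A sequence of real numbers (x_n) is Cauchy if and only if for every ε > 0 and every function g : ℕ → ℕ there exists N ∈ ℕ such that for all i, j ∈ [N, N+g(N)], |x_i − x_j| ≤ ε. -/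
theorem cauchy_iff_metastable (x : ℕ → ℝ) :
    CauchySeq x ↔
      ∀ ε : ℝ, 0 < ε → ∀ g : ℕ → ℕ, ∃ N : ℕ,
        ∀ i, N ≤ i → i ≤ N + g N → ∀ j, N ≤ j → j ≤ N + g N → |x i - x j| ≤ ε := by
  constructor
  · intro h ε hε g
    obtain ⟨N, hN⟩ := Metric.cauchySeq_iff.mp h ε hε
    exact ⟨N, fun i hi _ j hj _ => by
      have := hN i hi j hj
      rw [Real.dist_eq] at this
      linarith⟩
  · intro h
    by_contra hc
    rw [Metric.cauchySeq_iff] at hc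
    push_neg at hc
    obtain ⟨ε, hε, H⟩ := hc
    choose m hm n hn hd using H
    set g : ℕ → ℕ := fun N => max (m N) (n N) - N with hg
    obtain ⟨N, hN⟩ := h (ε / 2) (by linarith) g
    have hmax : N ≤ max (m N) (n N) := le_trans (hm N) (le_max_left _ _)
    have hgN : N + g N = max (m N) (n N) := by
      simp [hg]; omega
    have h1 : |x (m N) - x (n N)| ≤ ε / 2 :=
      hN (m N) (hm N) (by rw [hgN]; exact le_max_left _ _)
        (n N) (hn N) (by rw [hgN]; exact le_max_right _ _)
    have := hd N
    rw [Real.dist_eq] at this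
    linarith
end

section
/- Let f : [0,1] → [0,1] be monotone (nondecreasing) and continuous, and let (x_n) ⊆ [0,1] satisfy x_{n+1} = (1−t_n)x_n + t_n f(x_n) for all n, where (t_n) ⊆ [0,1]. Then (x_n) is monotone: if f(x_0) ≥ x_0 then (x_n) is nondecreasing, and if f(x_0) ≤ x_0 then (x_n) is nonincreasing. In particular (x_n) converges. -/
theorem KM_monotone_of_monotone_map
    (f : ℝ → ℝ) (hf : ∀ x ∈ Set.Icc (0:ℝ) 1, f x ∈ Set.Icc (0:ℝ) 1)
    (hcont : ContinuousOn f (Set.Icc (0:ℝ) 1))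
    (hfmono : ∀ a ∈ Set.Icc (0:ℝ) 1, ∀ b ∈ Set.Icc (0:ℝ) 1, a ≤ b → f a ≤ f b)
    (t x : ℕ → ℝ) (ht : ∀ n, t n ∈ Set.Icc (0:ℝ) 1) (hx0 : x 0 ∈ Set.Icc (0:ℝ) 1)
    (hiter : ∀ n, x (n+1) = (1 - t n) * x n + t n * f (x n)) :
    (x 0 ≤ f (x 0) → Monotone x) ∧ (f (x 0) ≤ x 0 → Antitone x) ∧
      ∃ l : ℝ, Filter.Tendsto x Filter.atTop (nhds l) := by
  have hmem : ∀ n, x n ∈ Set.Icc (0:ℝ) 1 := by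
    intro n
    induction n with
    | zero => exact hx0
    | succ n ih =>
      have hfx := hf _ ih
      obtain ⟨ht0, ht1⟩ := ht n
      rw [hiter n]
      constructor
      · nlinarith [ih.1, ih.2, hfx.1, hfx.2]
      · nlinarith [ih.1, ih.2, hfx.1, hfx.2]
  have hmono : x 0 ≤ f (x 0) → Monotone x := by
    intro h0
    have key : ∀ n, x n ≤ f (x n) ∧ x n ≤ x (n+1) := by
      intro n
      induction n with
      | zero =>
        refine ⟨h0, ?_⟩
        rw [hiter 0]
        obtain ⟨ht0, ht1⟩ := ht 0
        nlinarith
      | succ n ih =>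
        obtain ⟨hle, _⟩ := ih
        obtain ⟨ht0, ht1⟩ := ht n
        have hup : x (n+1) ≤ f (x n) := by rw [hiter n]; nlinarith
        have hlo : x n ≤ x (n+1) := by rw [hiter n]; nlinarith
        have h1 : x (n+1) ≤ f (x (n+1)) :=
          hup.trans (hfmono _ (hmem n) _ (hmem (n+1)) hlo)
        refine ⟨h1, ?_⟩
        rw [hiter (n+1)]
        obtain ⟨hs0, hs1⟩ := ht (n+1)
        nlinarith
    exact monotone_nat_of_le_succ fun n => (key n).2
  have hanti : f (x 0) ≤ x 0 → Antitone x := by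
    intro h0
    have key : ∀ n, f (x n) ≤ x n ∧ x (n+1) ≤ x n := by
      intro n
      induction n with
      | zero =>
        refine ⟨h0, ?_⟩
        rw [hiter 0]
        obtain ⟨ht0, ht1⟩ := ht 0
        nlinarith
      | succ n ih =>
        obtain ⟨hle, _⟩ := ih
        obtain ⟨ht0, ht1⟩ := ht n
        have hup : f (x n) ≤ x (n+1) := by rw [hiter n]; nlinarith
        have hlo : x (n+1) ≤ x n := by rw [hiter n]; nlinarith
        have h1 : f (x (n+1)) ≤ x (n+1) :=
          (hfmono _ (hmem (n+1)) _ (hmem n) hlo).trans hup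
        refine ⟨h1, ?_⟩
        rw [hiter (n+1)]
        obtain ⟨hs0, hs1⟩ := ht (n+1)
        nlinarith
    exact antitone_nat_of_succ_le fun n => (key n).2
  refine ⟨hmono, hanti, ?_⟩
  rcases le_total (x 0) (f (x 0)) with h | h
  · exact ⟨⨆ n, x n, tendsto_atTop_ciSup (hmono h)
      ⟨1, fun y ⟨n, hn⟩ => hn ▸ (hmem n).2⟩⟩
  · exact ⟨⨅ n, x n, tendsto_atTop_ciInf (hanti h)
      ⟨0, fun y ⟨n, hn⟩ => hn ▸ (hmem n).1⟩⟩
end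

section
/- Let L > 0 and f : [0,1] → [0,1] be L-Lipschitz. Let x, x* ∈ [0,1], δ ∈ (0,1), and t ∈ [0, (2−δ)/(L+1)] be such that x* = (1−t)x + t·f(x). If p is a fixed point of f lying between x and x*, then |x* − p| ≤ (1−δ)|x − p|. -/
theorem lipschitz_KM_step_contraction
    (L : ℝ) (hL : 0 < L) (f : ℝ → ℝ)
    (hf : ∀ a ∈ Set.Icc (0:ℝ) 1, f a ∈ Set.Icc (0:ℝ) 1)
    (hlip : ∀ a ∈ Set.Icc (0:ℝ) 1, ∀ b ∈ Set.Icc (0:ℝ) 1, |f a - f b| ≤ L * |a - b|)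
    (x xs : ℝ) (hx : x ∈ Set.Icc (0:ℝ) 1) (hxs : xs ∈ Set.Icc (0:ℝ) 1)
    (δ : ℝ) (hδ : δ ∈ Set.Ioo (0:ℝ) 1)
    (t : ℝ) (ht : t ∈ Set.Icc (0:ℝ) ((2 - δ)/(L + 1)))
    (hstep : xs = (1 - t) * x + t * f x)
    (p : ℝ) (hp : f p = p) (hbet : min x xs ≤ p ∧ p ≤ max x xs) :
    |xs - p| ≤ (1 - δ) * |x - p| := by
  obtain ⟨hb1, hb2⟩ := hbet
  obtain ⟨hx0, hx1⟩ := hx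
  obtain ⟨hs0, hs1⟩ := hxs
  obtain ⟨hδ0, hδ1⟩ := hδ
  obtain ⟨ht0, ht1⟩ := ht
  have hp01 : p ∈ Set.Icc (0:ℝ) 1 := by
    constructor
    · exact le_trans (le_min hx0 hs0) hb1
    · exact le_trans hb2 (max_le hx1 hs1)
  have hw := hlip x ⟨hx0, hx1⟩ p hp01
  rw [hp, abs_le] at hw
  obtain ⟨hw1, hw2⟩ := hw
  have hLt : t * (L + 1) ≤ 2 - δ := by
    have hL1 : (0:ℝ) < L + 1 := by linarith
    rw [le_div_iff₀ hL1] at ht1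
    linarith
  have hsign : (x - p) * (xs - p) ≤ 0 := by
    rcases le_total x xs with h | h
    · have h1 : x ≤ p := le_trans (by simp [min_eq_left h]) hb1
      have h2 : p ≤ xs := le_trans hb2 (by simp [max_eq_right h])
      nlinarith
    · have h1 : xs ≤ p := le_trans (by simp [min_eq_right h]) hb1
      have h2 : p ≤ x := le_trans hb2 (by simp [max_eq_left h])
      nlinarith
  rcases lt_trichotomy p x with hu | hu | hu
  · have hxp : 0 < x - p := by linarith
    have habs1 : |x - p| = x - p := abs_of_nonneg hxp.le
    have hxsp : xs - p ≤ 0 := by nlinarith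
    have habs2 : |xs - p| = -(xs - p) := abs_of_nonpos hxsp
    rw [habs1, habs2]
    nlinarith [mul_le_mul_of_nonneg_left hw1 ht0,
      mul_le_mul_of_nonneg_right hLt hxp.le]
  · have hxfx : f x = p := by rw [← hu, hp]
    have : xs = p := by rw [hstep, hxfx, ← hu]; ring
    simp [this, hu]
  · have hxp : 0 < p - x := by linarith
    have habs1 : |x - p| = -(x - p) := abs_of_nonpos (by linarith)
    have hxsp : 0 ≤ xs - p := by nlinarith
    have habs2 : |xs - p| = xs - p := abs_of_nonneg hxsp
    rw [habs1, habs2]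
    nlinarith [mul_le_mul_of_nonneg_left hw2 ht0,
      mul_le_mul_of_nonneg_right hLt hxp.le]
end

section
/- Let (x_n) be a sequence in [0,1] and f : [0,1] → [0,1], with switching sequence (q_n) for (x_n) relative to f. Then for every r with q_r < ∞ and q_{r+1} < ∞, the finite sequence (x_n)_{n ∈ [q_r, q_{r+1})} is monotone, provided for each n, x_{n+1} lies between x_n and f(x_n). -/
/-- The sign sequence for `(x_n)` relative to `f`: `σ_0 = 1`, and `σ_{n+1}` is the sign of
`f(x_n) - x_n` if nonzero, else `σ_n`. -/
noncomputable def signSeq (f : ℝ → ℝ) (x : ℕ → ℝ) : ℕ → ℤ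
  | 0 => 1
  | n + 1 =>
      if 0 < f (x n) - x n then 1
      else if f (x n) - x n < 0 then -1
      else signSeq f x n

/-- The switching sequence for `(x_n)` relative to `f`: `q_0 = 0`, and `q_{n+1}` is the least
`k > q_n` with `σ_{k+1} = -σ_{q_n+1}` if it exists, else `∞` (and `∞` propagates, since no
`k : ℕ∞` satisfies `⊤ < k`). -/
noncomputable def switchSeq (f : ℝ → ℝ) (x : ℕ → ℝ) : ℕ → ℕ∞
  | 0 => 0
  | n + 1 =>
      sInf {k : ℕ∞ | switchSeq f x n < k ∧ ∃ m : ℕ, k = (m : ℕ∞) ∧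
        signSeq f x (m + 1) = - signSeq f x ((switchSeq f x n).toNat + 1)}

lemma signSeq_mem (f : ℝ → ℝ) (x : ℕ → ℝ) : ∀ n, signSeq f x n = 1 ∨ signSeq f x n = -1 := by
  intro n
  induction n with
  | zero => left; rfl
  | succ n ih =>
    rw [show signSeq f x (n+1) = (if 0 < f (x n) - x n then 1 else if f (x n) - x n < 0 then -1 else signSeq f x n) from rfl]
    split_ifs with h1 h2
    · left; rfl
    · right; rfl
    · exact ih

lemma sign_one_le (f : ℝ → ℝ) (x : ℕ → ℝ) (n : ℕ) (h : signSeq f x (n+1) = 1) :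
    x n ≤ f (x n) := by
  by_contra hc
  push_neg at hc
  have : signSeq f x (n+1) = -1 := by
    show (if 0 < f (x n) - x n then 1 else if f (x n) - x n < 0 then -1 else signSeq f x n) = -1
    rw [if_neg (by linarith), if_pos (by linarith)]
  omega

lemma sign_neg_le (f : ℝ → ℝ) (x : ℕ → ℝ) (n : ℕ) (h : signSeq f x (n+1) = -1) :
    f (x n) ≤ x n := by
  by_contra hc
  push_neg at hc
  have : signSeq f x (n+1) = 1 := by
    show (if 0 < f (x n) - x n then 1 else if f (x n) - x n < 0 then -1 else signSeq f x n) = 1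
    rw [if_pos (by linarith)]
  omega

theorem switchSeq_monotone_between
    (f : ℝ → ℝ) (hf : ∀ a ∈ Set.Icc (0:ℝ) 1, f a ∈ Set.Icc (0:ℝ) 1)
    (x : ℕ → ℝ) (hx : ∀ n, x n ∈ Set.Icc (0:ℝ) 1)
    (hbet : ∀ n, min (x n) (f (x n)) ≤ x (n+1) ∧ x (n+1) ≤ max (x n) (f (x n)))
    (r : ℕ) (hfin : switchSeq f x r < ⊤) (hfin' : switchSeq f x (r+1) < ⊤) :
    (∀ i j : ℕ, (switchSeq f x r).toNat ≤ i → i ≤ j → (j : ℕ∞) < switchSeq f x (r+1) →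
        x i ≤ x j) ∨
    (∀ i j : ℕ, (switchSeq f x r).toNat ≤ i → i ≤ j → (j : ℕ∞) < switchSeq f x (r+1) →
        x j ≤ x i) := by
  set q := (switchSeq f x r).toNat with hq
  have hqeq : switchSeq f x r = (q : ℕ∞) := (ENat.coe_toNat hfin.ne).symm
  have hQ : switchSeq f x (r+1) = sInf {k : ℕ∞ | switchSeq f x r < k ∧ ∃ m : ℕ, k = (m : ℕ∞) ∧
        signSeq f x (m + 1) = - signSeq f x (q + 1)} := rfl
  -- key: sign is constant on [q, Q)
  have key : ∀ n : ℕ, q ≤ n → (n : ℕ∞) < switchSeq f x (r+1) →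
      signSeq f x (n+1) = signSeq f x (q+1) := by
    intro n hn hnQ
    rcases eq_or_lt_of_le hn with h | h
    · rw [h]
    · by_contra hc
      have hmem : (n : ℕ∞) ∈ {k : ℕ∞ | switchSeq f x r < k ∧ ∃ m : ℕ, k = (m : ℕ∞) ∧
          signSeq f x (m + 1) = - signSeq f x (q + 1)} := by
        refine ⟨by rw [hqeq]; exact_mod_cast h, n, rfl, ?_⟩
        rcases signSeq_mem f x (n+1) with h1 | h1 <;> rcases signSeq_mem f x (q+1) with h2 | h2 <;>
          omega
      have := csInf_le (OrderBot.bddBelow _) hmem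
      rw [← hQ] at this
      exact absurd hnQ (not_lt.mpr this)
  rcases signSeq_mem f x (q+1) with hs | hs
  · left
    intro i j hqi hij hjQ
    induction j, hij using Nat.le_induction with
    | base => exact le_rfl
    | succ j hij ih =>
      have hjQ' : (j:ℕ∞) < switchSeq f x (r+1) :=
        lt_trans (by exact_mod_cast Nat.lt_succ_self j) hjQ
      have hsj : signSeq f x (j+1) = 1 := (key j (le_trans hqi hij) hjQ').trans hs
      have hb := (hbet j).1
      rw [min_eq_left (sign_one_le f x j hsj)] at hb
      exact le_trans (ih hjQ') hb
  · right
    intro i j hqi hij hjQ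
    induction j, hij using Nat.le_induction with
    | base => exact le_rfl
    | succ j hij ih =>
      have hjQ' : (j:ℕ∞) < switchSeq f x (r+1) :=
        lt_trans (by exact_mod_cast Nat.lt_succ_self j) hjQ
      have hsj : signSeq f x (j+1) = -1 := (key j (le_trans hqi hij) hjQ').trans hs
      have hb := (hbet j).2
      rw [max_eq_left (sign_neg_le f x j hsj)] at hb
      exact le_trans hb (ih hjQ')
end

section
/- Let f : [0,1] → [0,1] be uniformly continuous with modulus of uniform continuity ω, and let (x_n) be a sequence in [0,1] such that for each n, x_{n+1} lies between x_n and f(x_n). Assume (x_n − x_{n+1}) tends to 0 with rate of convergence β. Then for every ε > 0 and every g : ℕ → ℕ there exists N ≤ Φ(ε,g) such that for all i, j ∈ [N, N+g(N)], |x_i − x_j| ≤ ε, where Φ(ε,g) := u_{2m²} with m := ⌈6/ε⌉, c := 1/(4m), A(p) := 1/max(1, 12m·g(p)), C(p) := min(A(p), ω(A(p))), u_0 := β(c), and u_{n+1} := max(u_n + g(u_n) + 1, β(C(u_n))). -/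
/-!
If all the windows `[u k, u k + g (u k)]`, `k ≤ 2 m²`, oscillate by more than `6 / m`, each of
them crosses some band `[r / m, (r + 1) / m]`, and by pigeonhole three windows `k + 1 < k₂ < k₃`
cross the same band. Windows `k₂` and `k₃` make the sequence cross the band upwards and downwards
after `u (k + 2)`, with steps below `ω (A (u (k + 1)))`; since `x (n + 1)` lies between `x n` and
`f (x n)`, uniform continuity then shows that `f` moves no point of the band by `A (u (k + 1))` or
more. So inside the band the steps are below `A (u (k + 1))`, and window `k + 1`, whose steps are
below `A (u k) ≤ 1 / (12 m)`, is too short to cross a band of width `1 / m`.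
-/

open Set

theorem exists_le_lt_succ_of_le_of_lt {α : Type*} [LinearOrder α] {x : ℕ → α} {s t : ℕ} {p : α}
    (hst : s ≤ t) (hs : x s ≤ p) (ht : p < x t) :
    ∃ n, s ≤ n ∧ n < t ∧ x n ≤ p ∧ p < x (n + 1) := by
  induction t, hst using Nat.le_induction with
  | base => exact absurd ht (not_lt.mpr hs)
  | succ t hst ih =>
    by_cases hpt : x t ≤ p
    · exact ⟨t, hst, t.lt_succ_self, hpt, ht⟩
    · obtain ⟨n, hsn, hnt, hn⟩ := ih (not_le.mp hpt)
      exact ⟨n, hsn, hnt.trans t.lt_succ_self, hn⟩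

theorem Finset.exists_lt_lt_of_card_mul_two_lt {α β : Type*} [LinearOrder α] {s : Finset α}
    {t : Finset β} {r : α → β} (hr : ∀ a ∈ s, r a ∈ t) (hst : t.card * 2 < s.card) :
    ∃ a ∈ s, ∃ b ∈ s, ∃ c ∈ s, a < b ∧ b < c ∧ r b = r a ∧ r c = r a := by
  classical
  obtain ⟨y, -, hy⟩ := exists_lt_card_fiber_of_mul_lt_card_of_maps_to hr hst
  set S := {a ∈ s | r a = y}
  have he : ∀ i, S.orderEmbOfFin rfl i ∈ s ∧ r (S.orderEmbOfFin rfl i) = y :=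
    fun i => mem_filter.mp (S.orderEmbOfFin_mem rfl i)
  refine ⟨_, (he ⟨0, by omega⟩).1, _, (he ⟨1, by omega⟩).1, _, (he ⟨2, by omega⟩).1,
    (S.orderEmbOfFin rfl).strictMono (by simp [Fin.lt_def]),
    (S.orderEmbOfFin rfl).strictMono (by simp [Fin.lt_def]), ?_, ?_⟩ <;>
  simp only [he]

theorem exists_nat_div_le_of_add_two_div_le {n a b : ℝ} (hn : 0 < n) (ha : 0 ≤ a)
    (hab : a + 2 / n ≤ b) : ∃ r : ℕ, a ≤ r / n ∧ (r + 1) / n ≤ b := by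
  refine ⟨⌈a * n⌉₊, (le_div_iff₀ hn).mpr (Nat.le_ceil _), ?_⟩
  have hceil := Nat.ceil_lt_add_one (mul_nonneg ha hn.le)
  calc ((⌈a * n⌉₊ : ℝ) + 1) / n ≤ (a * n + 2) / n :=
        div_le_div_of_nonneg_right (by linarith) hn.le
    _ = a + 2 / n := by field_simp
    _ ≤ b := hab

theorem mul_one_div_max_one_mul_le {K : ℝ} (hK : 0 < K) (y : ℝ) :
    y * (1 / max 1 (K * y)) ≤ 1 / K := by
  rw [mul_one_div, div_le_div_iff₀ (lt_max_of_lt_left one_pos) hK, one_mul, mul_comm]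
  exact le_max_right _ _

section Sequence

variable {x : ℕ → ℝ}

theorem le_add_add_mul_of_steps {s t L : ℕ} {c d E B : ℝ} (hE : 0 ≤ E) (hB : 0 ≤ B)
    (hst : s ≤ t) (htL : t ≤ s + L) (hs : x s ≤ c) (ht : d ≤ x t)
    (hstep : ∀ n, s ≤ n → n < t → x (n + 1) - x n ≤ E)
    (hband : ∀ n, s ≤ n → n < t → c < x n → x n < d → x (n + 1) - x n ≤ B) :
    d ≤ c + E + L * B := by
  -- Until `x` first reaches `d`, a step from below `c` lands below `c + E`, any other adds `≤ B`.
  have hbefore : ∀ k, s + k ≤ t → (∀ i < k, x (s + i) < d) → x (s + k) ≤ c + E + k * B := by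
    intro k
    induction k with
    | zero => intro _ _; simp only [add_zero, CharP.cast_eq_zero, zero_mul]; linarith
    | succ k ih =>
      intro hk hlt
      have hprev := ih (by omega) fun i hi => hlt i (by omega)
      have hE' := hstep (s + k) (by omega) (by omega)
      rw [← add_assoc]
      push_cast
      rcases le_or_gt (x (s + k)) c with hc | hc
      · nlinarith
      · linarith [hband (s + k) (by omega) (by omega) hc (hlt k (by omega))]
  have hreach : ∃ k, d ≤ x (s + k) := ⟨t - s, by rwa [Nat.add_sub_cancel' hst]⟩
  have hfirst : Nat.find hreach ≤ t - s := Nat.find_min' hreach (by rwa [Nat.add_sub_cancel' hst])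
  calc d ≤ x (s + Nat.find hreach) := Nat.find_spec hreach
    _ ≤ c + E + Nat.find hreach * B :=
      hbefore _ (by omega) fun i hi => not_le.mp (Nat.find_min hreach hi)
    _ ≤ c + E + L * B := by gcongr; exact_mod_cast (by omega : Nat.find hreach ≤ L)

def SpansBand (x : ℕ → ℝ) (N L : ℕ) (a b : ℝ) : Prop :=
  ∃ i ∈ Icc N (N + L), ∃ j ∈ Icc N (N + L), x i ≤ a ∧ b ≤ x j

theorem SpansBand.one_le {N L : ℕ} {a b : ℝ} (h : SpansBand x N L a b) (hab : a < b) :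
    1 ≤ L := by
  obtain ⟨i, ⟨hi, hi'⟩, j, ⟨hj, hj'⟩, hxi, hxj⟩ := h
  have : i ≠ j := fun hij => by subst hij; linarith
  omega

theorem SpansBand.sub_le {N L : ℕ} {a b E δ : ℝ} (h : SpansBand x N L a b) (hE0 : 0 ≤ E)
    (hδ : 0 ≤ δ) (hE : ∀ n, N ≤ n → |x n - x (n + 1)| ≤ E)
    (hband : ∀ n, N ≤ n → x n ∈ Ioo a b → |x (n + 1) - x n| ≤ δ) :
    b - a ≤ E + L * δ := by
  obtain ⟨i, ⟨hi, hi'⟩, j, ⟨hj, hj'⟩, hxi, hxj⟩ := h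
  have hup : ∀ n, N ≤ n → x (n + 1) - x n ≤ E := fun n hn =>
    (le_abs_self _).trans ((abs_sub_comm _ _).trans_le (hE n hn))
  have hdown : ∀ n, N ≤ n → x n - x (n + 1) ≤ E := fun n hn => (le_abs_self _).trans (hE n hn)
  rcases le_total i j with hij | hji
  · have := le_add_add_mul_of_steps (L := L) hE0 hδ hij (by omega) hxi hxj
      (fun n hn _ => hup n (by omega))
      (fun n hn _ h₁ h₂ => (le_abs_self _).trans (hband n (by omega) ⟨h₁, h₂⟩))
    linarith
  · have := le_add_add_mul_of_steps (x := fun n => -x n) (c := -b) (d := -a) (L := L) hE0 hδ hji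
      (by omega) (neg_le_neg hxj) (neg_le_neg hxi)
      (fun n hn _ => by linarith [hdown n (by omega)])
      (fun n hn _ h₁ h₂ => by
        linarith [neg_abs_le (x (n + 1) - x n), hband n (by omega) ⟨by linarith, by linarith⟩])
    linarith

theorem exists_spansBand_of_le_abs_sub {N L m : ℕ} (hm : 0 < m) (hx : ∀ n, x n ∈ Icc (0 : ℝ) 1)
    {i j : ℕ} (hi : i ∈ Icc N (N + L)) (hj : j ∈ Icc N (N + L)) (hij : 2 / m ≤ |x i - x j|) :
    ∃ r < m, SpansBand x N L (r / m) ((r + 1) / m) := by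
  wlog hle : x i ≤ x j generalizing i j
  · exact this hj hi (by rwa [abs_sub_comm]) (le_of_not_ge hle)
  have hm' : (0 : ℝ) < m := Nat.cast_pos.mpr hm
  rw [abs_sub_comm, abs_of_nonneg (sub_nonneg.mpr hle)] at hij
  obtain ⟨r, hr₁, hr₂⟩ := exists_nat_div_le_of_add_two_div_le (b := x j) hm' (hx i).1 (by linarith)
  refine ⟨r, ?_, i, hi, j, hj, hr₁, hr₂⟩
  have hr : ((r : ℝ) + 1) / m ≤ 1 := hr₂.trans (hx j).2
  rw [div_le_one hm'] at hr
  exact_mod_cast (by linarith : (r : ℝ) < m)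

end Sequence

section Iteration

variable {f : ℝ → ℝ} {x : ℕ → ℝ} {D : Set ℝ} [D.OrdConnected] {ρ δ : ℝ}

theorem sub_lt_apply_of_le_of_lt (hbet : ∀ n, x (n + 1) ≤ max (x n) (f (x n)))
    (hx : ∀ n, x n ∈ D) (hf : ∀ a ∈ D, ∀ b ∈ D, |a - b| < ρ → |f a - f b| < δ) {s t : ℕ}
    (hst : s ≤ t) (hstep : ∀ n, s ≤ n → n < t → |x n - x (n + 1)| ≤ ρ) {p : ℝ}
    (hs : x s ≤ p) (ht : p < x t) : p - δ < f p := by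
  obtain ⟨n, hsn, hnt, hnp, hpn⟩ := exists_le_lt_succ_of_le_of_lt hst hs ht
  have hp : p ∈ D := OrdConnected.out' (hx s) (hx t) ⟨hs, ht.le⟩
  have hfx : x (n + 1) ≤ f (x n) := (le_max_iff.mp (hbet n)).resolve_left (by linarith)
  have hclose : |x n - p| < ρ := by
    rw [abs_sub_comm, abs_of_nonneg (sub_nonneg.mpr hnp)]
    linarith [abs_sub_comm (x n) (x (n + 1)), le_abs_self (x (n + 1) - x n), hstep n hsn hnt]
  linarith [(abs_lt.mp (hf _ (hx n) p hp hclose)).2]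

theorem apply_lt_add_of_le_of_lt (hbet : ∀ n, min (x n) (f (x n)) ≤ x (n + 1))
    (hx : ∀ n, x n ∈ D) (hf : ∀ a ∈ D, ∀ b ∈ D, |a - b| < ρ → |f a - f b| < δ) {s t : ℕ}
    (hst : s ≤ t) (hstep : ∀ n, s ≤ n → n < t → |x n - x (n + 1)| ≤ ρ) {p : ℝ}
    (hs : p ≤ x s) (ht : x t < p) : f p < p + δ := by
  obtain ⟨n, hsn, hnt, hpn, hnp⟩ := exists_le_lt_succ_of_le_of_lt (α := ℝᵒᵈ) hst hs ht
  change p ≤ x n at hpn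
  change x (n + 1) < p at hnp
  have hp : p ∈ D := OrdConnected.out' (hx t) (hx s) ⟨ht.le, hs⟩
  have hfx : f (x n) ≤ x (n + 1) := (min_le_iff.mp (hbet n)).resolve_left (by linarith)
  have hclose : |x n - p| < ρ := by
    rw [abs_of_nonneg (sub_nonneg.mpr hpn)]
    linarith [le_abs_self (x n - x (n + 1)), hstep n hsn hnt]
  linarith [(abs_lt.mp (hf _ (hx n) p hp hclose)).1]

theorem abs_apply_sub_lt_of_spansBand
    (hbet : ∀ n, min (x n) (f (x n)) ≤ x (n + 1) ∧ x (n + 1) ≤ max (x n) (f (x n)))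
    (hx : ∀ n, x n ∈ D) (hf : ∀ a ∈ D, ∀ b ∈ D, |a - b| < ρ → |f a - f b| < δ)
    {M N₂ L₂ N₃ L₃ : ℕ} {a b : ℝ} (hM : M ≤ N₂) (hN : N₂ + L₂ < N₃)
    (hstep : ∀ n, M ≤ n → |x n - x (n + 1)| ≤ ρ)
    (h₂ : SpansBand x N₂ L₂ a b) (h₃ : SpansBand x N₃ L₃ a b) {p : ℝ} (hp : p ∈ Ioo a b) :
    |f p - p| < δ := by
  obtain ⟨s₂, ⟨hs₂, hs₂'⟩, t₂, ⟨ht₂, ht₂'⟩, hxs₂, hxt₂⟩ := h₂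
  obtain ⟨s₃, ⟨hs₃, hs₃'⟩, t₃, ⟨ht₃, ht₃'⟩, hxs₃, hxt₃⟩ := h₃
  have hup := sub_lt_apply_of_le_of_lt (fun n => (hbet n).2) hx hf (by omega : s₂ ≤ t₃)
    (fun n hn _ => hstep n (by omega)) (hxs₂.trans hp.1.le) (hp.2.trans_le hxt₃)
  have hdown := apply_lt_add_of_le_of_lt (fun n => (hbet n).1) hx hf (by omega : t₂ ≤ s₃)
    (fun n hn _ => hstep n (by omega)) (hp.2.le.trans hxt₂) (hxs₃.trans_lt hp.1)
  rw [abs_sub_lt_iff]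
  constructor <;> linarith

end Iteration

section Windows

variable {f : ℝ → ℝ} {x : ℕ → ℝ} {ω : ℝ → ℝ} {g u : ℕ → ℕ} {A : ℕ → ℝ}

theorem sub_le_of_three_spansBand
    (hbet : ∀ n, min (x n) (f (x n)) ≤ x (n + 1) ∧ x (n + 1) ≤ max (x n) (f (x n)))
    (hx : ∀ n, x n ∈ Icc (0 : ℝ) 1)
    (hω : ∀ δ : ℝ, 0 < δ → ∀ a ∈ Icc (0 : ℝ) 1, ∀ b ∈ Icc (0 : ℝ) 1,
      |a - b| < ω δ → |f a - f b| < δ)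
    (hA : ∀ p, 0 < A p) (hu : ∀ k, u k + g (u k) < u (k + 1))
    (hstep : ∀ k n, u (k + 1) ≤ n → |x n - x (n + 1)| ≤ min (A (u k)) (ω (A (u k))))
    {k k₂ k₃ : ℕ} (hk₂ : k + 1 < k₂) (hk₃ : k₂ < k₃) {a b : ℝ}
    (h₁ : SpansBand x (u (k + 1)) (g (u (k + 1))) a b) (h₂ : SpansBand x (u k₂) (g (u k₂)) a b)
    (h₃ : SpansBand x (u k₃) (g (u k₃)) a b) :
    b - a ≤ A (u k) + g (u (k + 1)) * A (u (k + 1)) := by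
  have hmono : Monotone u := monotone_nat_of_le_succ fun k => (Nat.le_add_right _ _).trans (hu k).le
  have hfix : ∀ p ∈ Ioo a b, |f p - p| < A (u (k + 1)) := fun p hp =>
    abs_apply_sub_lt_of_spansBand hbet hx (hω _ (hA _)) (hmono hk₂)
      ((hu k₂).trans_le (hmono hk₃)) (fun n hn => (hstep _ n hn).trans (min_le_right _ _)) h₂ h₃ hp
  exact h₁.sub_le (hA _).le (hA _).le (fun n hn => (hstep k n hn).trans (min_le_left _ _))
    fun n _ hn => (abs_sub_left_of_mem_uIcc (hbet n)).trans (hfix _ hn).le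

theorem exists_le_forall_abs_sub_le
    (hbet : ∀ n, min (x n) (f (x n)) ≤ x (n + 1) ∧ x (n + 1) ≤ max (x n) (f (x n)))
    (hx : ∀ n, x n ∈ Icc (0 : ℝ) 1)
    (hω : ∀ δ : ℝ, 0 < δ → ∀ a ∈ Icc (0 : ℝ) 1, ∀ b ∈ Icc (0 : ℝ) 1,
      |a - b| < ω δ → |f a - f b| < δ)
    {m : ℕ} (hm : 0 < m) (hA : ∀ p, 0 < A p) (hgA : ∀ p, g p * A p ≤ 1 / (12 * m))
    (hu : ∀ k, u k + g (u k) < u (k + 1))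
    (hstep : ∀ k n, u (k + 1) ≤ n → |x n - x (n + 1)| ≤ min (A (u k)) (ω (A (u k)))) :
    ∃ N ≤ u (2 * m ^ 2), ∀ i ∈ Icc N (N + g N), ∀ j ∈ Icc N (N + g N), |x i - x j| ≤ 6 / m := by
  by_contra! hbad
  have hmono : Monotone u := monotone_nat_of_le_succ fun k => (Nat.le_add_right _ _).trans (hu k).le
  have hm' : (0 : ℝ) < m := Nat.cast_pos.mpr hm
  have hspan : ∀ k ≤ 2 * m ^ 2, ∃ r < m, SpansBand x (u k) (g (u k)) (r / m) ((r + 1) / m) := by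
    intro k hk
    obtain ⟨i, hi, j, hj, hij⟩ := hbad (u k) (hmono hk)
    exact exists_spansBand_of_le_abs_sub hm hx hi hj
      ((div_le_div_of_nonneg_right (by norm_num) hm'.le).trans hij.le)
  choose! r hr hrspan using hspan
  have hm2 : 2 ≤ m := by
    obtain ⟨i, -, j, -, hij⟩ := hbad (u 0) (hmono (Nat.zero_le _))
    have h6 : (6 : ℝ) / m < 1 :=
      hij.trans_le (abs_sub_le_of_nonneg_of_le (hx i).1 (hx i).2 (hx j).1 (hx j).2)
    rw [div_lt_one hm'] at h6
    exact_mod_cast (by linarith : (2 : ℝ) ≤ m)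
  obtain ⟨k₁, hk₁, k₂, hk₂, k₃, hk₃, h₁₂, h₂₃, hr₂, hr₃⟩ :=
    Finset.exists_lt_lt_of_card_mul_two_lt (s := Finset.Icc 1 (2 * m ^ 2)) (t := Finset.range m)
      (fun k hk => Finset.mem_range.mpr (hr k (Finset.mem_Icc.mp hk).2))
      (by rw [Finset.card_range, Nat.card_Icc, Nat.add_sub_cancel]; nlinarith)
  rw [Finset.mem_Icc] at hk₁ hk₂ hk₃
  obtain ⟨k, rfl⟩ : ∃ k, k₁ = k + 1 := Nat.exists_eq_add_of_le' hk₁.1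
  have hcross := sub_le_of_three_spansBand hbet hx hω hA hu hstep h₁₂ h₂₃
    (hrspan _ hk₁.2) (hr₂ ▸ hrspan _ hk₂.2) (hr₃ ▸ hrspan _ hk₃.2)
  have hg : 1 ≤ g (u k) := (hrspan k (by omega)).one_le (by gcongr; linarith)
  have hAk : A (u k) ≤ 1 / (12 * m) :=
    (le_mul_of_one_le_left (hA _).le (by exact_mod_cast hg)).trans (hgA _)
  have hwidth : ((r (k + 1) : ℝ) + 1) / m - r (k + 1) / m = 1 / m := by ring
  have h12 : (1 : ℝ) / (12 * m) = 1 / m / 12 := by ring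
  linarith [hgA (u (k + 1)), one_div_pos.mpr hm']

end Windows

theorem metastability_KM_continuous_general
    (f : ℝ → ℝ)
    (ω : ℝ → ℝ) (hωpos : ∀ δ : ℝ, 0 < δ → 0 < ω δ)
    (hω : ∀ δ : ℝ, 0 < δ → ∀ a ∈ Set.Icc (0:ℝ) 1, ∀ b ∈ Set.Icc (0:ℝ) 1,
      |a - b| < ω δ → |f a - f b| < δ)
    (x : ℕ → ℝ) (hx : ∀ n, x n ∈ Set.Icc (0:ℝ) 1)
    (hbet : ∀ n, min (x n) (f (x n)) ≤ x (n+1) ∧ x (n+1) ≤ max (x n) (f (x n)))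
    (β : ℝ → ℕ) (hβ : ∀ δ : ℝ, 0 < δ → ∀ n, β δ ≤ n → |x n - x (n+1)| ≤ δ)
    (ε : ℝ) (hε : 0 < ε) (g : ℕ → ℕ) :
    ∃ N, (N ≤
      (let m : ℕ := ⌈6/ε⌉₊
       let c : ℝ := 1/(4*(m:ℝ))
       let A : ℕ → ℝ := fun p => 1 / max 1 (12*(m:ℝ)*(g p : ℝ))
       let C : ℕ → ℝ := fun p => min (A p) (ω (A p))
       let u : ℕ → ℕ := fun n => Nat.rec (β c) (fun _ un => max (un + g un + 1) (β (C un))) n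
       u (2*m^2))) ∧
      ∀ i, N ≤ i → i ≤ N + g N → ∀ j, N ≤ j → j ≤ N + g N → |x i - x j| ≤ ε := by
  let m : ℕ := ⌈6 / ε⌉₊
  let A : ℕ → ℝ := fun p => 1 / max 1 (12 * (m : ℝ) * (g p : ℝ))
  let u : ℕ → ℕ := fun n => Nat.rec (β (1 / (4 * (m : ℝ))))
    (fun _ un => max (un + g un + 1) (β (min (A un) (ω (A un))))) n
  have hm : 0 < m := Nat.ceil_pos.mpr (by positivity)
  have hA : ∀ p, 0 < A p := fun p => one_div_pos.mpr (lt_max_of_lt_left one_pos)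
  have hu : ∀ k, u k + g (u k) < u (k + 1) := fun k =>
    (Nat.lt_succ_self _).trans_le (le_max_left _ _)
  have hstep : ∀ k n, u (k + 1) ≤ n → |x n - x (n + 1)| ≤ min (A (u k)) (ω (A (u k))) :=
    fun k n hn => hβ _ (lt_min (hA _) (hωpos _ (hA _))) n ((le_max_right _ _).trans hn)
  obtain ⟨N, hN, hwin⟩ := exists_le_forall_abs_sub_le hbet hx hω hm hA
    (fun p => mul_one_div_max_one_mul_le (by positivity) _) hu hstep
  have hε' : 6 / (m : ℝ) ≤ ε := (div_le_comm₀ (by positivity) hε).mpr (Nat.le_ceil _)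
  exact ⟨N, hN, fun i hi hi' j hj hj' => (hwin i ⟨hi, hi'⟩ j ⟨hj, hj'⟩).trans hε'⟩

theorem metastability_KM_continuous
    (f : ℝ → ℝ) (hf : ∀ a ∈ Set.Icc (0:ℝ) 1, f a ∈ Set.Icc (0:ℝ) 1)
    (ω : ℝ → ℝ) (hωpos : ∀ δ : ℝ, 0 < δ → 0 < ω δ)
    (hω : ∀ δ : ℝ, 0 < δ → ∀ a ∈ Set.Icc (0:ℝ) 1, ∀ b ∈ Set.Icc (0:ℝ) 1,
      |a - b| < ω δ → |f a - f b| < δ)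
    (x : ℕ → ℝ) (hx : ∀ n, x n ∈ Set.Icc (0:ℝ) 1)
    (hbet : ∀ n, min (x n) (f (x n)) ≤ x (n+1) ∧ x (n+1) ≤ max (x n) (f (x n)))
    (β : ℝ → ℕ) (hβ : ∀ δ : ℝ, 0 < δ → ∀ n, β δ ≤ n → |x n - x (n+1)| ≤ δ)
    (ε : ℝ) (hε : 0 < ε) (g : ℕ → ℕ) :
    ∃ N, (N ≤
      (let m : ℕ := ⌈6/ε⌉₊
       let c : ℝ := 1/(4*(m:ℝ))
       let A : ℕ → ℝ := fun p => 1 / max 1 (12*(m:ℝ)*(g p : ℝ))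
       let C : ℕ → ℝ := fun p => min (A p) (ω (A p))
       let u : ℕ → ℕ := fun n => Nat.rec (β c) (fun _ un => max (un + g un + 1) (β (C un))) n
       u (2*m^2))) ∧
      ∀ i, N ≤ i → i ≤ N + g N → ∀ j, N ≤ j → j ≤ N + g N → |x i - x j| ≤ ε :=
  metastability_KM_continuous_general f ω hωpos hω x hx hbet β hβ ε hε g
end

section
/- Let f : [0,1] → [0,1] be uniformly continuous and let (x_n) be a sequence in [0,1] such that for each n, x_{n+1} lies between x_n and f(x_n). If x_n − x_{n+1} → 0, then (x_n) converges. -/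
open Filter

theorem KM_converges_of_asymptotically_regular
    (f : ℝ → ℝ) (hf : ∀ a ∈ Set.Icc (0:ℝ) 1, f a ∈ Set.Icc (0:ℝ) 1)
    (hcont : UniformContinuousOn f (Set.Icc (0:ℝ) 1))
    (x : ℕ → ℝ) (hx : ∀ n, x n ∈ Set.Icc (0:ℝ) 1)
    (hbet : ∀ n, min (x n) (f (x n)) ≤ x (n+1) ∧ x (n+1) ≤ max (x n) (f (x n)))
    (hreg : Filter.Tendsto (fun n => x n - x (n+1)) Filter.atTop (nhds 0)) :
    ∃ l : ℝ, Filter.Tendsto x Filter.atTop (nhds l) := by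
  have hbddA : IsBoundedUnder (· ≤ ·) atTop x := isBoundedUnder_of ⟨1, fun n => (hx n).2⟩
  have hbddB : IsBoundedUnder (· ≥ ·) atTop x := isBoundedUnder_of ⟨0, fun n => (hx n).1⟩
  set L := liminf x atTop with hLdef
  set M := limsup x atTop with hMdef
  have hLleM : L ≤ M := liminf_le_limsup hbddA hbddB
  have hcobA : IsCoboundedUnder (· ≤ ·) atTop x := hbddB.isCoboundedUnder_le
  have hcobB : IsCoboundedUnder (· ≥ ·) atTop x := hbddA.isCoboundedUnder_ge
  have hL0 : (0:ℝ) ≤ L := le_liminf_of_le hcobB (Eventually.of_forall fun n => (hx n).1)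
  have hM1 : M ≤ 1 := limsup_le_of_le hcobA (Eventually.of_forall fun n => (hx n).2)
  -- small steps
  have hstep : ∀ δ > (0:ℝ), ∃ N, ∀ n ≥ N, |x n - x (n+1)| < δ := by
    intro δ hδ
    obtain ⟨N, hN⟩ := (Metric.tendsto_atTop.1 hreg) δ hδ
    exact ⟨N, fun n hn => by simpa [Real.dist_eq] using hN n hn⟩
  -- pointwise continuity
  have hcont' : ∀ c ∈ Set.Icc (0:ℝ) 1, ∀ ε > (0:ℝ), ∃ δ > (0:ℝ),
      ∀ y ∈ Set.Icc (0:ℝ) 1, |y - c| < δ → |f y - f c| < ε := by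
    intro c hc ε hε
    obtain ⟨δ, hδ, h⟩ := Metric.uniformContinuousOn_iff.1 hcont ε hε
    exact ⟨δ, hδ, fun y hy hyc => by
      simpa [Real.dist_eq] using h y hy c hc (by simpa [Real.dist_eq] using hyc)⟩
  rcases eq_or_lt_of_le hLleM with hEq | hLM
  · exact ⟨L, tendsto_of_le_liminf_of_limsup_le le_rfl hEq.ge hbddA hbddB⟩
  by_cases hfix : ∀ c, L < c → c < M → f c = c
  · -- the sequence gets trapped at a fixed point, hence eventually constant
    set c := (L + M) / 2 with hcdef
    set δ := (M - L) / 4 with hδdef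
    have hδ : 0 < δ := by simp [hδdef]; linarith
    obtain ⟨N, hN⟩ := hstep δ hδ
    have h1 : ∃ᶠ n in atTop, x n < c :=
      frequently_lt_of_liminf_lt hcobB (by simp [hcdef]; linarith)
    obtain ⟨n1, hn1c, hn1N⟩ := (h1.and_eventually (eventually_ge_atTop N)).exists
    have h2 : ∃ᶠ n in atTop, c < x n :=
      frequently_lt_of_lt_limsup hcobA (by simp [hcdef]; linarith)
    obtain ⟨n2, hn2c, hn2N⟩ := (h2.and_eventually (eventually_ge_atTop n1)).exists
    have hex : ∃ k, c < x (n1 + k) := ⟨n2 - n1, by rwa [Nat.add_sub_cancel' hn2N]⟩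
    set k0 := Nat.find hex with hk0def
    have hk0pos : k0 ≠ 0 := by
      intro h
      have := Nat.find_spec hex
      rw [hk0def] at h
      rw [h] at this
      simp at this
      linarith
    set m := n1 + k0 with hmdef
    have hmc : c < x m := Nat.find_spec hex
    have hprev : ¬ c < x (n1 + (k0 - 1)) := Nat.find_min hex (by omega)
    push_neg at hprev
    have hm1 : n1 + (k0 - 1) + 1 = m := by omega
    have hstepm : |x (n1 + (k0 - 1)) - x (n1 + (k0 - 1) + 1)| < δ :=
      hN _ (by omega)
    have hxmub : x m < c + δ := by
      have := abs_lt.1 hstepm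
      rw [hm1] at this
      linarith [this.1]
    have hclm : c + δ < M := by rw [hcdef, hδdef]; linarith
    have hconst : ∀ k, x (m + k) = x m := by
      intro k
      induction k with
      | zero => rfl
      | succ k ih =>
        have hfxk : f (x (m + k)) = x (m + k) := by
          rw [ih]
          have hLc : L < c := by rw [hcdef]; linarith
          exact hfix _ (by linarith) (by linarith)
        have hb := hbet (m + k)
        rw [hfxk, min_self, max_self] at hb
        have : x (m + k + 1) = x (m + k) := le_antisymm hb.2 hb.1
        rw [show m + (k + 1) = m + k + 1 from rfl, this, ih]
    refine ⟨x m, Tendsto.congr' ?_ tendsto_const_nhds⟩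
    filter_upwards [eventually_ge_atTop m] with n hn
    have := hconst (n - m)
    rw [Nat.add_sub_cancel' hn] at this
    exact this.symm
  · push_neg at hfix
    obtain ⟨c, hc1, hc2, hc3⟩ := hfix
    have hcI : c ∈ Set.Icc (0:ℝ) 1 := ⟨by linarith, by linarith⟩
    exfalso
    rcases hc3.lt_or_gt with hlt | hgt
    · -- f c < c : sequence eventually stays below c + δ, contradicting limsup = M
      set ε := (c - f c) / 2 with hεdef
      have hε : 0 < ε := by rw [hεdef]; linarith
      obtain ⟨δ0, hδ0, hband0⟩ := hcont' c hcI ε hε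
      set δ := min δ0 (min ε (M - c)) / 2 with hδdef
      have hδ : 0 < δ := by
        rw [hδdef]
        have : 0 < min δ0 (min ε (M - c)) := lt_min hδ0 (lt_min hε (by linarith))
        linarith
      have hδδ0 : δ < δ0 := by
        rw [hδdef]
        have h1 : min δ0 (min ε (M - c)) ≤ δ0 := min_le_left _ _
        linarith
      have hδε : δ ≤ ε := by
        rw [hδdef]
        have h1 : min δ0 (min ε (M - c)) ≤ ε := le_trans (min_le_right _ _) (min_le_left _ _)
        linarith
      have hδM : c + δ < M := by
        rw [hδdef]
        have h1 : min δ0 (min ε (M - c)) ≤ M - c := le_trans (min_le_right _ _) (min_le_right _ _)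
        linarith
      have hband : ∀ y ∈ Set.Icc (0:ℝ) 1, |y - c| ≤ δ → f y ≤ y := by
        intro y hy hyc
        have h := hband0 y hy (lt_of_le_of_lt hyc hδδ0)
        have h1 := abs_le.1 hyc
        have h2 := abs_lt.1 h
        rw [hεdef] at h2
        linarith [h2.2, h1.1]
      obtain ⟨N, hN⟩ := hstep δ hδ
      have h1 : ∃ᶠ n in atTop, x n < c + δ :=
        frequently_lt_of_liminf_lt hcobB (by linarith)
      obtain ⟨n0, hn0c, hn0N⟩ := (h1.and_eventually (eventually_ge_atTop N)).exists
      have key : ∀ k, x (n0 + k) < c + δ := by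
        intro k
        induction k with
        | zero => simpa using hn0c
        | succ k ih =>
          have hnN : n0 + k ≥ N := by omega
          have hst := abs_lt.1 (hN _ hnN)
          rcases le_or_gt (c - δ) (x (n0 + k)) with hge | hlt'
          · have hb := hbet (n0 + k)
            have hfle : f (x (n0 + k)) ≤ x (n0 + k) :=
              hband _ (hx _) (abs_le.2 ⟨by linarith, by linarith⟩)
            have hmax : max (x (n0 + k)) (f (x (n0 + k))) = x (n0 + k) := max_eq_left hfle
            rw [hmax] at hb
            calc x (n0 + (k + 1)) = x (n0 + k + 1) := rfl
              _ ≤ x (n0 + k) := hb.2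
              _ < c + δ := ih
          · calc x (n0 + (k + 1)) = x (n0 + k + 1) := rfl
              _ < x (n0 + k) + δ := by linarith [hst.1]
              _ < c + δ := by linarith
      have hMle : M ≤ c + δ := by
        apply limsup_le_of_le hcobA
        filter_upwards [eventually_ge_atTop n0] with n hn
        have := key (n - n0)
        rw [Nat.add_sub_cancel' hn] at this
        linarith
      linarith
    · -- c < f c : sequence eventually stays above c - δ, contradicting liminf = L
      set ε := (f c - c) / 2 with hεdef
      have hε : 0 < ε := by rw [hεdef]; linarith
      obtain ⟨δ0, hδ0, hband0⟩ := hcont' c hcI ε hε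
      set δ := min δ0 (min ε (c - L)) / 2 with hδdef
      have hδ : 0 < δ := by
        rw [hδdef]
        have : 0 < min δ0 (min ε (c - L)) := lt_min hδ0 (lt_min hε (by linarith))
        linarith
      have hδδ0 : δ < δ0 := by
        rw [hδdef]
        have h1 : min δ0 (min ε (c - L)) ≤ δ0 := min_le_left _ _
        linarith
      have hδε : δ ≤ ε := by
        rw [hδdef]
        have h1 : min δ0 (min ε (c - L)) ≤ ε := le_trans (min_le_right _ _) (min_le_left _ _)
        linarith
      have hδL : L < c - δ := by
        rw [hδdef]
        have h1 : min δ0 (min ε (c - L)) ≤ c - L := le_trans (min_le_right _ _) (min_le_right _ _)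
        linarith
      have hband : ∀ y ∈ Set.Icc (0:ℝ) 1, |y - c| ≤ δ → y ≤ f y := by
        intro y hy hyc
        have h := hband0 y hy (lt_of_le_of_lt hyc hδδ0)
        have h1 := abs_le.1 hyc
        have h2 := abs_lt.1 h
        rw [hεdef] at h2
        linarith [h2.1, h1.2]
      obtain ⟨N, hN⟩ := hstep δ hδ
      have h1 : ∃ᶠ n in atTop, c - δ < x n :=
        frequently_lt_of_lt_limsup hcobA (by linarith)
      obtain ⟨n0, hn0c, hn0N⟩ := (h1.and_eventually (eventually_ge_atTop N)).exists
      have key : ∀ k, c - δ < x (n0 + k) := by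
        intro k
        induction k with
        | zero => simpa using hn0c
        | succ k ih =>
          have hnN : n0 + k ≥ N := by omega
          have hst := abs_lt.1 (hN _ hnN)
          rcases le_or_gt (x (n0 + k)) (c + δ) with hle | hgt'
          · have hb := hbet (n0 + k)
            have hfge : x (n0 + k) ≤ f (x (n0 + k)) :=
              hband _ (hx _) (abs_le.2 ⟨by linarith, by linarith⟩)
            have hmin : min (x (n0 + k)) (f (x (n0 + k))) = x (n0 + k) := min_eq_left hfge
            rw [hmin] at hb
            calc c - δ < x (n0 + k) := ih
              _ ≤ x (n0 + k + 1) := hb.1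
              _ = x (n0 + (k + 1)) := rfl
          · calc c - δ < x (n0 + k) - δ := by linarith
              _ < x (n0 + k + 1) := by linarith [hst.2]
              _ = x (n0 + (k + 1)) := rfl
      have hLge : c - δ ≤ L := by
        apply le_liminf_of_le hcobB
        filter_upwards [eventually_ge_atTop n0] with n hn
        have := key (n - n0)
        rw [Nat.add_sub_cancel' hn] at this
        linarith
      linarith
end

section
/- Let f : [0,1] → [0,1] be continuous and (x_n) ⊆ [0,1] satisfy x_{n+1} = (1−1/(n+1))x_n + (1/(n+1))f(x_n) for all n. Then (x_n) converges, and its limit is a fixed point of f. -/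
open Filter Set

private lemma km_step (f : ℝ → ℝ) (x : ℕ → ℝ)
    (hiter : ∀ n : ℕ, x (n+1) = (1 - 1/((n:ℝ)+1)) * x n + (1/((n:ℝ)+1)) * f (x n)) :
    ∀ n : ℕ, x (n+1) = x n + (f (x n) - x n) / ((n:ℝ)+1) := by
  intro n
  have h : ((n:ℝ)+1) ≠ 0 := by positivity
  rw [hiter n]; field_simp; ring

private lemma km_step_small (f : ℝ → ℝ) (hf : ∀ a ∈ Set.Icc (0:ℝ) 1, f a ∈ Set.Icc (0:ℝ) 1)
    (x : ℕ → ℝ) (hx : ∀ n, x n ∈ Set.Icc (0:ℝ) 1)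
    (hiter : ∀ n : ℕ, x (n+1) = (1 - 1/((n:ℝ)+1)) * x n + (1/((n:ℝ)+1)) * f (x n)) :
    ∀ ε > (0:ℝ), ∃ N, ∀ n ≥ N, |x (n+1) - x n| < ε := by
  intro ε hε
  obtain ⟨N, hN⟩ := exists_nat_gt (1/ε)
  refine ⟨N, fun n hn => ?_⟩
  have hpos : (0:ℝ) < (n:ℝ)+1 := by positivity
  have h1 : |f (x n) - x n| ≤ 1 := by
    have h2 := hf (x n) (hx n); have h3 := hx n
    simp only [mem_Icc] at h2 h3
    rw [abs_le]; constructor <;> linarith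
  have heq : x (n+1) - x n = (f (x n) - x n) / ((n:ℝ)+1) := by
    rw [km_step f x hiter n]; ring
  rw [heq, abs_div, abs_of_pos hpos]
  have hn' : (1:ℝ)/ε < (n:ℝ)+1 := by
    have : (N:ℝ) ≤ (n:ℝ) := Nat.cast_le.mpr hn
    linarith
  have h2 : (1:ℝ) < ε * ((n:ℝ)+1) := by
    rw [div_lt_iff₀ hε] at hn'; linarith
  calc |f (x n) - x n| / ((n:ℝ)+1) ≤ 1 / ((n:ℝ)+1) := by gcongr
    _ < ε := by rw [div_lt_iff₀ hpos]; linarith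

private lemma km_trap (f : ℝ → ℝ) (hf : ∀ a ∈ Set.Icc (0:ℝ) 1, f a ∈ Set.Icc (0:ℝ) 1)
    (hcont : ContinuousOn f (Set.Icc (0:ℝ) 1))
    (x : ℕ → ℝ) (hx : ∀ n, x n ∈ Set.Icc (0:ℝ) 1)
    (hiter : ∀ n : ℕ, x (n+1) = (1 - 1/((n:ℝ)+1)) * x n + (1/((n:ℝ)+1)) * f (x n))
    (d : ℝ) (hd : d ∈ Set.Icc (0:ℝ) 1) (hfd : d < f d)
    (hfreq : ∃ᶠ n in atTop, d < x n) :
    ∀ᶠ n in atTop, d ≤ x n := by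
  have hc : ContinuousWithinAt f (Set.Icc 0 1) d := hcont d hd
  rw [Metric.continuousWithinAt_iff] at hc
  obtain ⟨δ, hδ0, hδ⟩ := hc ((f d - d)/2) (by linarith)
  set ε := min δ ((f d - d)/2) with hεdef
  have hε0 : 0 < ε := lt_min hδ0 (by linarith)
  -- near d and above d, f pushes up
  have key : ∀ y ∈ Set.Icc (0:ℝ) 1, |y - d| < ε → y ≤ f y := by
    intro y hy hyd
    have h1 : dist y d < δ := by
      rw [Real.dist_eq]; exact lt_of_lt_of_le hyd (min_le_left _ _)
    have h2 := hδ hy h1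
    rw [Real.dist_eq, abs_lt] at h2
    have h3 : |y - d| < (f d - d)/2 := lt_of_lt_of_le hyd (min_le_right _ _)
    rw [abs_lt] at h3
    linarith
  obtain ⟨N, hN⟩ := km_step_small f hf x hx hiter ε hε0
  obtain ⟨n₀, hn₀N, hn₀⟩ := (hfreq.and_eventually (eventually_ge_atTop N)).exists
  rw [eventually_atTop]
  refine ⟨n₀, fun m hm => ?_⟩
  -- induction from n₀
  induction m, hm using Nat.le_induction with
  | base => exact le_of_lt hn₀N
  | succ m hmge ih =>
    have hmN : m ≥ N := le_trans hn₀ hmge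
    by_cases hcase : x m < d + ε
    · have h1 : |x m - d| < ε := by rw [abs_lt]; constructor <;> linarith
      have h2 : x m ≤ f (x m) := key (x m) (hx m) h1
      rw [km_step f x hiter m]
      have : (0:ℝ) ≤ (f (x m) - x m) / ((m:ℝ)+1) :=
        div_nonneg (by linarith) (by positivity)
      linarith
    · have h1 := hN m hmN
      rw [abs_lt] at h1
      push_neg at hcase
      linarith

private lemma km_div (f : ℝ → ℝ)
    (x : ℕ → ℝ) (hx : ∀ n, x n ∈ Set.Icc (0:ℝ) 1)
    (hiter : ∀ n : ℕ, x (n+1) = (1 - 1/((n:ℝ)+1)) * x n + (1/((n:ℝ)+1)) * f (x n))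
    (η : ℝ) (hη : 0 < η) (N : ℕ) (h : ∀ n ≥ N, η ≤ f (x n) - x n) : False := by
  have grow : ∀ j : ℕ, x N + η * ∑ i ∈ Finset.range j, 1/((N+i:ℝ)+1) ≤ x (N + j) := by
    intro j
    induction j with
    | zero => simp
    | succ j ih =>
      have hstep := km_step f x hiter (N + j)
      have hge := h (N + j) (Nat.le_add_right N j)
      have hpos : (0:ℝ) < ((N+j:ℕ):ℝ)+1 := by positivity
      have h2 : η / (((N+j:ℕ):ℝ)+1) ≤ (f (x (N+j)) - x (N+j)) / (((N+j:ℕ):ℝ)+1) := by gcongr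
      rw [Finset.sum_range_succ, show N + (j+1) = (N+j)+1 from rfl, hstep]
      push_cast at h2 ⊢
      rw [mul_add]
      have : η * (1 / ((N:ℝ) + (j:ℝ) + 1)) = η / ((N:ℝ)+(j:ℝ)+1) := by ring
      rw [this]
      linarith
  -- the partial sums diverge
  have hdiv : Tendsto (fun j => ∑ i ∈ Finset.range j, 1/((N+i:ℝ)+1)) atTop atTop := by
    have h1 : Tendsto (fun j => (∑ i ∈ Finset.range (N+j), (1/((i:ℝ)+1))) -
        ∑ i ∈ Finset.range N, (1/((i:ℝ)+1))) atTop atTop := by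
      apply Filter.tendsto_atTop_add_const_right
      exact Real.tendsto_sum_range_one_div_nat_succ_atTop.comp (tendsto_add_atTop_nat N |>.comp tendsto_id) |>.congr (by intro j; simp [Nat.add_comm])
    refine h1.congr (fun j => ?_)
    rw [Finset.sum_range_add]
    push_cast
    ring
  obtain ⟨j, hj⟩ := (hdiv.eventually_ge_atTop (2/η)).exists
  have h2 : (2:ℝ) ≤ η * ∑ i ∈ Finset.range j, 1/((N+i:ℝ)+1) := by
    rw [div_le_iff₀ hη] at hj
    linarith [hj]
  have h3 := grow j
  have h4 := (hx N).1
  have h5 := (hx (N + j)).2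
  linarith

-- transformed (mirror) versions
private lemma km_mirror (f : ℝ → ℝ) (hf : ∀ a ∈ Set.Icc (0:ℝ) 1, f a ∈ Set.Icc (0:ℝ) 1)
    (hcont : ContinuousOn f (Set.Icc (0:ℝ) 1))
    (x : ℕ → ℝ) (hx : ∀ n, x n ∈ Set.Icc (0:ℝ) 1)
    (hiter : ∀ n : ℕ, x (n+1) = (1 - 1/((n:ℝ)+1)) * x n + (1/((n:ℝ)+1)) * f (x n)) :
    (∀ a ∈ Set.Icc (0:ℝ) 1, (1 - f (1 - a)) ∈ Set.Icc (0:ℝ) 1) ∧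
    ContinuousOn (fun t => 1 - f (1 - t)) (Set.Icc (0:ℝ) 1) ∧
    (∀ n, (1 - x n) ∈ Set.Icc (0:ℝ) 1) ∧
    (∀ n : ℕ, (1 - x (n+1)) = (1 - 1/((n:ℝ)+1)) * (1 - x n) +
      (1/((n:ℝ)+1)) * (1 - f (1 - (1 - x n)))) := by
  refine ⟨?_, ?_, ?_, ?_⟩
  · intro a ha
    simp only [mem_Icc] at ha ⊢
    have h1 : (1:ℝ) - a ∈ Set.Icc (0:ℝ) 1 := by
      simp only [mem_Icc]; constructor <;> linarith
    have h2 := hf _ h1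
    simp only [mem_Icc] at h2
    constructor <;> linarith
  · apply ContinuousOn.sub continuousOn_const
    apply hcont.comp ((continuous_const.sub continuous_id).continuousOn)
    intro a ha
    simp only [mem_Icc] at ha ⊢
    constructor <;> simp <;> linarith
  · intro n
    have h := hx n
    simp only [mem_Icc] at h ⊢
    constructor <;> linarith
  · intro n
    have h : (1:ℝ) - (1 - x n) = x n := by ring
    rw [h, hiter n]
    have hpos : ((n:ℝ)+1) ≠ 0 := by positivity
    field_simp
    ring

theorem franks_marzec
    (f : ℝ → ℝ) (hf : ∀ a ∈ Set.Icc (0:ℝ) 1, f a ∈ Set.Icc (0:ℝ) 1)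
    (hcont : ContinuousOn f (Set.Icc (0:ℝ) 1))
    (x : ℕ → ℝ) (hx : ∀ n, x n ∈ Set.Icc (0:ℝ) 1)
    (hiter : ∀ n : ℕ, x (n+1) = (1 - 1/((n:ℝ)+1)) * x n + (1/((n:ℝ)+1)) * f (x n)) :
    ∃ l : ℝ, Filter.Tendsto x Filter.atTop (nhds l) ∧ f l = l := by
  classical
  obtain ⟨hg, hgcont, hy, hyiter⟩ := km_mirror f hf hcont x hx hiter
  set g : ℝ → ℝ := fun t => 1 - f (1 - t) with hgdef
  set y : ℕ → ℝ := fun n => 1 - x n with hydef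
  have hbdd_le : IsBoundedUnder (· ≤ ·) atTop x := isBoundedUnder_of ⟨1, fun n => (hx n).2⟩
  have hbdd_ge : IsBoundedUnder (· ≥ ·) atTop x := isBoundedUnder_of ⟨0, fun n => (hx n).1⟩
  have hcob_le : IsCoboundedUnder (· ≤ ·) atTop x := hbdd_ge.isCoboundedUnder_le
  have hcob_ge : IsCoboundedUnder (· ≥ ·) atTop x := hbdd_le.isCoboundedUnder_ge
  set I := liminf x atTop with hIdef
  set S := limsup x atTop with hSdef
  have hIS : I ≤ S := liminf_le_limsup hbdd_le hbdd_ge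
  have hI0 : 0 ≤ I := le_liminf_of_le hcob_ge (Eventually.of_forall fun n => (hx n).1)
  have hS1 : S ≤ 1 := limsup_le_of_le hcob_le (Eventually.of_forall fun n => (hx n).2)
  -- main claim: I = S
  have hconv : I = S := by
    by_contra hne
    have hlt : I < S := lt_of_le_of_ne hIS hne
    by_cases hcase : ∃ d ∈ Set.Ioo I S, f d ≠ d
    · obtain ⟨d, ⟨hdI, hdS⟩, hfd⟩ := hcase
      have hdmem : d ∈ Set.Icc (0:ℝ) 1 := ⟨by linarith, by linarith⟩
      have hfreq_lt : ∃ᶠ n in atTop, x n < d := frequently_lt_of_liminf_lt hcob_ge hdI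
      have hfreq_gt : ∃ᶠ n in atTop, d < x n := frequently_lt_of_lt_limsup hcob_le hdS
      rcases lt_or_gt_of_ne hfd with hcase2 | hcase2
      · -- f d < d : use mirror system; trap above by d
        have hdmem' : (1:ℝ) - d ∈ Set.Icc (0:ℝ) 1 := ⟨by linarith [hdmem.2], by linarith [hdmem.1]⟩
        have hgd : 1 - d < g (1 - d) := by
          show 1 - d < 1 - f (1 - (1 - d))
          have : (1:ℝ) - (1 - d) = d := by ring
          rw [this]; linarith
        have hfreq' : ∃ᶠ n in atTop, 1 - d < y n := by
          refine hfreq_lt.mono fun n hn => ?_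
          show 1 - d < 1 - x n; linarith
        have htrap := km_trap g hg hgcont y hy hyiter (1 - d) hdmem' hgd hfreq'
        obtain ⟨n, hn1, hn2⟩ := (hfreq_gt.and_eventually htrap).exists
        have : (1:ℝ) - d ≤ 1 - x n := hn2
        linarith
      · -- d < f d : trap below by d
        have htrap := km_trap f hf hcont x hx hiter d hdmem hcase2 hfreq_gt
        obtain ⟨n, hn1, hn2⟩ := (hfreq_lt.and_eventually htrap).exists
        linarith
    · -- f = id on (I, S): sequence gets stuck
      push_neg at hcase
      have hcdef : ∃ c : ℝ, c = (I + S)/2 := ⟨_, rfl⟩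
      obtain ⟨c, hcdef⟩ := hcdef
      have hεdef : ∃ ε : ℝ, ε = (S - I)/2 := ⟨_, rfl⟩
      obtain ⟨ε, hεdef⟩ := hεdef
      have hε0 : 0 < ε := by rw [hεdef]; linarith
      have hfreq_lt : ∃ᶠ n in atTop, x n < c :=
        frequently_lt_of_liminf_lt hcob_ge (show I < c by rw [hcdef]; linarith)
      have hfreq_gt : ∃ᶠ n in atTop, c < x n :=
        frequently_lt_of_lt_limsup hcob_le (show c < S by rw [hcdef]; linarith)
      obtain ⟨N, hN⟩ := km_step_small f hf x hx hiter ε hε0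
      -- find a point of the sequence inside (I, S)
      obtain ⟨n, hnN, hnlt⟩ := (hfreq_lt.and_eventually (eventually_ge_atTop N)).exists
      obtain ⟨m, hm, hmge⟩ := (hfreq_gt.and_eventually (eventually_ge_atTop (n+1))).exists
      have hPex : ∃ j, c ≤ x (n + 1 + j) := by
        refine ⟨m - (n+1), ?_⟩
        rw [show n + 1 + (m - (n+1)) = m from by omega]
        exact le_of_lt hm
      obtain ⟨k, hk1, hk2⟩ : ∃ k, c ≤ x (n + 1 + k) ∧ ∀ j < k, x (n + 1 + j) < c :=
        ⟨Nat.find hPex, Nat.find_spec hPex, fun j hj => not_le.mp (Nat.find_min hPex hj)⟩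
      have hk1' : c ≤ x (n + k + 1) := by
        rwa [show n + 1 + k = n + k + 1 from by omega] at hk1
      have hprev : x (n + k) < c := by
        rcases Nat.eq_zero_or_pos k with hk0 | hk0
        · subst hk0; simpa using hnN
        · obtain ⟨j, rfl⟩ := Nat.exists_eq_succ_of_ne_zero hk0.ne'
          have h := hk2 j (Nat.lt_succ_self j)
          rwa [show n + (j+1) = n + 1 + j from by omega]
      have hstep := hN (n + k) (by omega)
      rw [abs_lt] at hstep
      have hxval : x (n + k + 1) ∈ Set.Ioo I S := by
        constructor
        · rw [hcdef] at hk1'; linarith [hk1']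
        · rw [hcdef] at hprev; rw [hεdef] at hstep; linarith [hstep.2, hprev]
      -- from this point on, the sequence is constant
      have hconst : ∀ j : ℕ, x ((n + k + 1) + j) = x (n + k + 1) := by
        intro j
        induction j with
        | zero => rfl
        | succ j ih =>
          have hmem : x ((n + k + 1) + j) ∈ Set.Ioo I S := by rw [ih]; exact hxval
          have hfix : f (x ((n + k + 1) + j)) = x ((n + k + 1) + j) := hcase _ hmem
          rw [show (n + k + 1) + (j+1) = ((n + k + 1) + j) + 1 from rfl,
            km_step f x hiter ((n + k + 1) + j), hfix]
          simp [ih]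
      have hev : ∀ᶠ m in atTop, x m = x (n + k + 1) := by
        rw [eventually_atTop]
        exact ⟨n + k + 1, fun m hm => by
          rw [show m = (n + k + 1) + (m - (n + k + 1)) from by omega]; exact hconst _⟩
      have hfr : ∃ᶠ m in atTop, x (n + k + 1) < x m :=
        frequently_lt_of_lt_limsup hcob_le hxval.2
      obtain ⟨m, hm1, hm2⟩ := (hfr.and_eventually hev).exists
      rw [hm2] at hm1
      exact lt_irrefl _ hm1
  -- convergence
  have htends : Tendsto x atTop (nhds S) :=
    tendsto_of_liminf_eq_limsup hconv rfl hbdd_le hbdd_ge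
  refine ⟨S, htends, ?_⟩
  have hSmem : S ∈ Set.Icc (0:ℝ) 1 := ⟨by rw [← hconv]; exact hI0, hS1⟩
  have hfx : Tendsto (fun n => f (x n)) atTop (nhds (f S)) := by
    have h1 : Tendsto x atTop (nhdsWithin S (Set.Icc 0 1)) :=
      tendsto_nhdsWithin_of_tendsto_nhds_of_eventually_within _ htends
        (Eventually.of_forall hx)
    exact (hcont S hSmem).tendsto.comp h1
  have hdiff : Tendsto (fun n => f (x n) - x n) atTop (nhds (f S - S)) := hfx.sub htends
  by_contra hne
  rcases lt_or_gt_of_ne hne with hlt | hlt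
  · -- f S < S : mirror diverges upward
    have hη : 0 < (S - f S)/2 := by linarith
    have hev : ∀ᶠ n in atTop, (S - f S)/2 ≤ g (y n) - y n := by
      have h2 : ∀ᶠ n in atTop, f (x n) - x n ∈ Set.Iio ((f S - S)/2) :=
        hdiff (Iio_mem_nhds (by linarith))
      refine h2.mono fun n hn => ?_
      simp only [Set.mem_Iio] at hn
      show (S - f S)/2 ≤ (1 - f (1 - (1 - x n))) - (1 - x n)
      have h3 : (1:ℝ) - (1 - x n) = x n := by ring
      rw [h3]; linarith
    obtain ⟨N, hN⟩ := eventually_atTop.mp hev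
    exact km_div g y hy hyiter _ hη N hN
  · -- S < f S : diverges upward
    have hη : 0 < (f S - S)/2 := by linarith
    have hev : ∀ᶠ n in atTop, (f S - S)/2 ≤ f (x n) - x n := by
      have h2 : ∀ᶠ n in atTop, f (x n) - x n ∈ Set.Ioi ((f S - S)/2) :=
        hdiff (Ioi_mem_nhds (by linarith))
      exact h2.mono fun n hn => le_of_lt hn
    obtain ⟨N, hN⟩ := eventually_atTop.mp hev
    exact km_div f x hx hiter _ hη N hN
end

section
/- Let f : [0,1] → [0,1] be uniformly continuous, and (x_n), (y_n) sequences in [0,1] such that for each n, y_n lies between x_n and f(x_n), and x_{n+1} lies between x_n and f(y_n). If x_n − x_{n+1} → 0 and x_n − y_n → 0, then (x_n) converges. -/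
open Filter

/-- Upward trap: if `f t > t` on a band around `c`, then once `x` is above `c - δ`
(at a time where steps and `x - y` are `< δ`), it stays above `c - δ`. -/
lemma ishikawa_invariant_up (f : ℝ → ℝ) (x y : ℕ → ℝ)
    (hx : ∀ n, x n ∈ Set.Icc (0:ℝ) 1) (hy : ∀ n, y n ∈ Set.Icc (0:ℝ) 1)
    (hbet₁ : ∀ n, min (x n) (f (x n)) ≤ y n ∧ y n ≤ max (x n) (f (x n)))
    (hbet₂ : ∀ n, min (x n) (f (y n)) ≤ x (n+1) ∧ x (n+1) ≤ max (x n) (f (y n)))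
    (c δ : ℝ) (hδ : 0 < δ) (N : ℕ)
    (hstep : ∀ n, N ≤ n → |x n - x (n+1)| < δ)
    (hclose : ∀ n, N ≤ n → |x n - y n| < δ)
    (hband : ∀ t ∈ Set.Icc (0:ℝ) 1, |t - c| ≤ 2*δ → t < f t) :
    ∀ n, N ≤ n → c - δ ≤ x n → ∀ m, n ≤ m → c - δ ≤ x m := by
  intro n hn hxn m hm
  induction m, hm using Nat.le_induction with
  | base => exact hxn
  | succ m hm ih =>
    have hNm : N ≤ m := le_trans hn hm
    by_cases h : x m ≤ c + δ
    · have hfx : x m < f (x m) := hband (x m) (hx m) (abs_le.mpr ⟨by linarith, by linarith⟩)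
      have hy1 : x m ≤ y m := by
        have := (hbet₁ m).1
        rwa [min_eq_left hfx.le] at this
      have hcl := abs_lt.mp (hclose m hNm)
      have hfy : y m < f (y m) := by
        refine hband (y m) (hy m) (abs_le.mpr ⟨by linarith, by linarith⟩)
      have h2 := (hbet₂ m).1
      have hmin : x m ≤ min (x m) (f (y m)) := le_min le_rfl (by linarith)
      linarith
    · have hs := abs_lt.mp (hstep m hNm)
      push_neg at h
      linarith

/-- Downward trap: mirror of `ishikawa_invariant_up`. -/
lemma ishikawa_invariant_down (f : ℝ → ℝ) (x y : ℕ → ℝ)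
    (hx : ∀ n, x n ∈ Set.Icc (0:ℝ) 1) (hy : ∀ n, y n ∈ Set.Icc (0:ℝ) 1)
    (hbet₁ : ∀ n, min (x n) (f (x n)) ≤ y n ∧ y n ≤ max (x n) (f (x n)))
    (hbet₂ : ∀ n, min (x n) (f (y n)) ≤ x (n+1) ∧ x (n+1) ≤ max (x n) (f (y n)))
    (c δ : ℝ) (hδ : 0 < δ) (N : ℕ)
    (hstep : ∀ n, N ≤ n → |x n - x (n+1)| < δ)
    (hclose : ∀ n, N ≤ n → |x n - y n| < δ)
    (hband : ∀ t ∈ Set.Icc (0:ℝ) 1, |t - c| ≤ 2*δ → f t < t) :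
    ∀ n, N ≤ n → x n ≤ c + δ → ∀ m, n ≤ m → x m ≤ c + δ := by
  intro n hn hxn m hm
  induction m, hm using Nat.le_induction with
  | base => exact hxn
  | succ m hm ih =>
    have hNm : N ≤ m := le_trans hn hm
    by_cases h : c - δ ≤ x m
    · have hfx : f (x m) < x m := hband (x m) (hx m) (abs_le.mpr ⟨by linarith, by linarith⟩)
      have hy1 : y m ≤ x m := by
        have := (hbet₁ m).2
        rwa [max_eq_left hfx.le] at this
      have hcl := abs_lt.mp (hclose m hNm)
      have hfy : f (y m) < y m := by
        refine hband (y m) (hy m) (abs_le.mpr ⟨by linarith, by linarith⟩)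
      have h2 := (hbet₂ m).2
      have hmax : max (x m) (f (y m)) ≤ x m := max_le le_rfl (by linarith)
      linarith
    · have hs := abs_lt.mp (hstep m hNm)
      push_neg at h
      linarith

theorem ishikawa_converges
    (f : ℝ → ℝ) (hf : ∀ a ∈ Set.Icc (0:ℝ) 1, f a ∈ Set.Icc (0:ℝ) 1)
    (hcont : UniformContinuousOn f (Set.Icc (0:ℝ) 1))
    (x y : ℕ → ℝ) (hx : ∀ n, x n ∈ Set.Icc (0:ℝ) 1) (hy : ∀ n, y n ∈ Set.Icc (0:ℝ) 1)
    (hbet₁ : ∀ n, min (x n) (f (x n)) ≤ y n ∧ y n ≤ max (x n) (f (x n)))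
    (hbet₂ : ∀ n, min (x n) (f (y n)) ≤ x (n+1) ∧ x (n+1) ≤ max (x n) (f (y n)))
    (hreg : Filter.Tendsto (fun n => x n - x (n+1)) Filter.atTop (nhds 0))
    (hxy : Filter.Tendsto (fun n => x n - y n) Filter.atTop (nhds 0)) :
    ∃ l : ℝ, Filter.Tendsto x Filter.atTop (nhds l) := by
  classical
  have hbdd : IsBoundedUnder (· ≤ ·) atTop x := isBoundedUnder_of ⟨1, fun n => (hx n).2⟩
  have hbdd' : IsBoundedUnder (· ≥ ·) atTop x := isBoundedUnder_of ⟨0, fun n => (hx n).1⟩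
  have hcob : IsCoboundedUnder (· ≤ ·) atTop x := hbdd'.isCoboundedUnder_le
  have hcob' : IsCoboundedUnder (· ≥ ·) atTop x := hbdd.isCoboundedUnder_ge
  set L := liminf x atTop with hL
  set M := limsup x atTop with hM
  by_cases hLM : L = M
  · exact ⟨M, tendsto_of_liminf_eq_limsup (hLM) rfl hbdd hbdd'⟩
  exfalso
  have hlt : L < M := lt_of_le_of_ne (liminf_le_limsup hbdd hbdd') hLM
  have hL0 : (0:ℝ) ≤ L := le_liminf_of_le hcob' (Eventually.of_forall fun n => (hx n).1)
  have hM1 : M ≤ 1 := limsup_le_of_le hcob (Eventually.of_forall fun n => (hx n).2)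
  -- helper to extract eventual bounds from the tendsto hypotheses
  have hsteps : ∀ δ : ℝ, 0 < δ → ∃ N, ∀ n, N ≤ n →
      |x n - x (n+1)| < δ ∧ |x n - y n| < δ := by
    intro δ hδ
    obtain ⟨N₁, h₁⟩ := Metric.tendsto_atTop.mp hreg δ hδ
    obtain ⟨N₂, h₂⟩ := Metric.tendsto_atTop.mp hxy δ hδ
    refine ⟨max N₁ N₂, fun n hn => ⟨?_, ?_⟩⟩
    · have := h₁ n (le_trans (le_max_left _ _) hn)
      rwa [Real.dist_eq, sub_zero] at this
    · have := h₂ n (le_trans (le_max_right _ _) hn)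
      rwa [Real.dist_eq, sub_zero] at this
  by_cases hfix : ∃ c ∈ Set.Ioo L M, f c ≠ c
  · obtain ⟨c, ⟨hcL, hcM⟩, hfc⟩ := hfix
    have hcIcc : c ∈ Set.Icc (0:ℝ) 1 := ⟨le_trans hL0 hcL.le, le_trans hcM.le hM1⟩
    rcases lt_or_gt_of_ne hfc with hdown | hup
    · -- f c < c : downward trap
      have hη : 0 < c - f c := by linarith
      obtain ⟨δ₀, hδ₀, hUC⟩ := Metric.uniformContinuousOn_iff.mp hcont ((c - f c)/2) (by linarith)
      set δ : ℝ := min (min (δ₀/4) ((c - f c)/8)) ((M - c)/2) with hδdef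
      have hδ : 0 < δ := by
        refine lt_min (lt_min (by linarith) (by linarith)) (by linarith)
      have hδ1 : δ ≤ δ₀/4 := le_trans (min_le_left _ _) (min_le_left _ _)
      have hδ2 : δ ≤ (c - f c)/8 := le_trans (min_le_left _ _) (min_le_right _ _)
      have hδ3 : δ ≤ (M - c)/2 := min_le_right _ _
      have hband : ∀ t ∈ Set.Icc (0:ℝ) 1, |t - c| ≤ 2*δ → f t < t := by
        intro t ht hdist
        have h1 : dist t c < δ₀ := by
          rw [Real.dist_eq]; linarith [abs_nonneg (t - c)]
        have h2 := hUC t ht c hcIcc h1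
        rw [Real.dist_eq] at h2
        have h2' := abs_lt.mp h2
        have h3 := abs_le.mp hdist
        linarith [h2'.1, h2'.2, h3.1, h3.2]
      obtain ⟨N, hN⟩ := hsteps δ hδ
      -- entry: frequently x n < c
      have hfreq : ∃ᶠ n in atTop, x n < c := frequently_lt_of_liminf_lt hcob' hcL
      obtain ⟨n, hnN, hxn⟩ := (frequently_atTop.mp hfreq) N
      have hinv := ishikawa_invariant_down f x y hx hy hbet₁ hbet₂ c δ hδ N
        (fun k hk => (hN k hk).1) (fun k hk => (hN k hk).2) hband n hnN (by linarith)
      have hfreq2 : ∃ᶠ m in atTop, c + δ < x m :=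
        frequently_lt_of_lt_limsup hcob (by linarith)
      obtain ⟨m, hmn, hxm⟩ := (frequently_atTop.mp hfreq2) n
      exact absurd (hinv m hmn) (by linarith)
    · -- c < f c : upward trap
      have hη : 0 < f c - c := by linarith
      obtain ⟨δ₀, hδ₀, hUC⟩ := Metric.uniformContinuousOn_iff.mp hcont ((f c - c)/2) (by linarith)
      set δ : ℝ := min (min (δ₀/4) ((f c - c)/8)) ((c - L)/2) with hδdef
      have hδ : 0 < δ := by
        refine lt_min (lt_min (by linarith) (by linarith)) (by linarith)
      have hδ1 : δ ≤ δ₀/4 := le_trans (min_le_left _ _) (min_le_left _ _)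
      have hδ2 : δ ≤ (f c - c)/8 := le_trans (min_le_left _ _) (min_le_right _ _)
      have hδ3 : δ ≤ (c - L)/2 := min_le_right _ _
      have hband : ∀ t ∈ Set.Icc (0:ℝ) 1, |t - c| ≤ 2*δ → t < f t := by
        intro t ht hdist
        have h1 : dist t c < δ₀ := by
          rw [Real.dist_eq]; linarith [abs_nonneg (t - c)]
        have h2 := hUC t ht c hcIcc h1
        rw [Real.dist_eq] at h2
        have h2' := abs_lt.mp h2
        have h3 := abs_le.mp hdist
        linarith [h2'.1, h2'.2, h3.1, h3.2]
      obtain ⟨N, hN⟩ := hsteps δ hδ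
      have hfreq : ∃ᶠ n in atTop, c < x n := frequently_lt_of_lt_limsup hcob hcM
      obtain ⟨n, hnN, hxn⟩ := (frequently_atTop.mp hfreq) N
      have hinv := ishikawa_invariant_up f x y hx hy hbet₁ hbet₂ c δ hδ N
        (fun k hk => (hN k hk).1) (fun k hk => (hN k hk).2) hband n hnN (by linarith)
      have hfreq2 : ∃ᶠ m in atTop, x m < c - δ :=
        frequently_lt_of_liminf_lt hcob' (by linarith)
      obtain ⟨m, hmn, hxm⟩ := (frequently_atTop.mp hfreq2) n
      exact absurd (hinv m hmn) (by linarith)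
  · -- every point of (L, M) is fixed by f
    push_neg at hfix
    set c : ℝ := (L + M)/2 with hc
    set δ : ℝ := (M - L)/4 with hδdef
    have hδ : 0 < δ := by rw [hδdef]; linarith
    obtain ⟨N, hN⟩ := hsteps δ hδ
    -- once x n is in the band [c-δ, c+δ] (n ≥ N), it is constant afterwards
    have hstuck : ∀ n, |x n - c| ≤ δ → x (n+1) = x n := by
      intro n hnb
      have hb := abs_le.mp hnb
      have hcd1 : L < c - δ := by rw [hc, hδdef]; linarith
      have hcd2 : c + δ < M := by rw [hc, hδdef]; linarith
      have hfx : f (x n) = x n := hfix (x n) ⟨by linarith [hb.1], by linarith [hb.2]⟩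
      have hyn : y n = x n := by
        have h1 := (hbet₁ n).1
        have h2 := (hbet₁ n).2
        simp only [hfx, min_self, max_self] at h1 h2
        linarith
      have hfy : f (y n) = x n := by rw [hyn, hfx]
      have h1 := (hbet₂ n).1
      have h2 := (hbet₂ n).2
      simp only [hfy, min_self, max_self] at h1 h2
      linarith
    -- the sequence drops below c - δ infinitely often, and exceeds c + δ infinitely often
    have hfreqlow : ∃ᶠ n in atTop, x n < c - δ :=
      frequently_lt_of_liminf_lt hcob' (by rw [hc, hδdef]; linarith)
    have hfreqhigh : ∃ᶠ n in atTop, c + δ < x n :=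
      frequently_lt_of_lt_limsup hcob (by rw [hc, hδdef]; linarith)
    obtain ⟨n₀, hn₀N, hxn₀⟩ := (frequently_atTop.mp hfreqlow) N
    obtain ⟨n₁, hn₁, hxn₁⟩ := (frequently_atTop.mp hfreqhigh) n₀
    -- crossing: first index after n₀ where x exceeds c - δ
    have hPex : ∃ k, c - δ < x (n₀ + k) := ⟨n₁ - n₀, by
      rw [Nat.add_sub_cancel' hn₁]; linarith⟩
    set k := Nat.find hPex with hk
    have hkspec : c - δ < x (n₀ + k) := Nat.find_spec hPex
    have hkpos : 0 < k := by
      rcases Nat.eq_zero_or_pos k with h0 | h; swap; · exact h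
      rw [h0] at hkspec; simp at hkspec; linarith
    have hkprev : ¬ (c - δ < x (n₀ + (k - 1))) := Nat.find_min hPex (by omega)
    push_neg at hkprev
    set m := n₀ + k with hm
    have hmN : N ≤ m - 1 := by omega
    have hstepm := (hN (m-1) hmN).1
    have hm1 : m - 1 + 1 = m := by omega
    have hm2 : n₀ + (k-1) = m - 1 := by omega
    rw [hm1] at hstepm
    rw [hm2] at hkprev
    have hs := abs_lt.mp hstepm
    have hmb : |x m - c| ≤ δ := abs_le.mpr ⟨by linarith [hkspec], by linarith⟩
    -- from m onwards the sequence is constant, equal to x m ≤ c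
    have hconst : ∀ j, m ≤ j → x j = x m := by
      intro j hj
      induction j, hj using Nat.le_induction with
      | base => rfl
      | succ j hj ih =>
        rw [hstuck j (by rw [ih]; exact hmb), ih]
    obtain ⟨p, hpm, hxp⟩ := (frequently_atTop.mp hfreqhigh) m
    have := hconst p hpm
    have hmb' := abs_le.mp hmb
    linarith [hmb'.2]
end

section
/- Let L > 0, f : [0,1] → [0,1] be L-Lipschitz, and (t_n), (x_n) sequences in [0,1] with x_{n+1} = (1−t_n)x_n + t_n f(x_n) for all n. Suppose there is δ ∈ (0,1) with t_n ≤ (2−δ)/(L+1) for all n. Then for every ε > 0 and every g : ℕ → ℕ there exists N ≤ Ψ(ε,g) with |x_i − x_j| ≤ ε for all i, j ∈ [N, N+g(N)], where Ψ(ε,g) := P_B with h_m(n) := g(m+n), P_0 := 0, P_{n+1} := P_n + (h̃_{P_n})^(⌈1/ε⌉+1)(0) (where h̃(n) = n + h(n) and the exponent denotes iteration), T := ⌈log_{(1−δ/2)} ε⌉ + 1, and B := T + g̃(P_T) + 1 with g̃(n) = n + g(n). -/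
/-!
With the largest admissible step `τ = (2 - δ) / (L + 1)`, every step moves `x n` towards
`E (x n) = x n + τ (f (x n) - x n)` without passing it, and the Lipschitz bound makes
`w ↦ E w + (1 - δ) w` monotone. Hence, once `E x - x` changes sign between two consecutive terms,
the whole tail stays in an interval of length `(1 - δ) |x (n + 1) - x n|`.

Cut the orbit of `0` under `n ↦ n + g n` into `T` blocks of `K` steps. If every block contains a
sign change, the diameters of the tails contract to `(1 - δ) ^ T ≤ ε`. Otherwise `x` is monotone on
some block, and one of its `K ≥ 1 / ε` consecutive steps moves `x` by at most `ε`.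
-/

open Set

/-- The paper's `g̃`. -/
def jump (g : ℕ → ℕ) (n : ℕ) : ℕ := n + g n

theorem monotone_iterate_jump (g : ℕ → ℕ) (p : ℕ) : Monotone fun i => (jump g)^[i] p :=
  fun _ _ hij => Function.monotone_iterate_of_id_le (fun n => Nat.le_add_right n (g n)) hij p

theorem iterate_jump_succ (g : ℕ → ℕ) (p i : ℕ) :
    (jump g)^[i] p + g ((jump g)^[i] p) = (jump g)^[i + 1] p := by
  rw [Function.iterate_succ_apply']
  rfl

theorem add_iterate_eq_iterate_jump (g : ℕ → ℕ) (p i : ℕ) :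
    p + (fun k => k + g (p + k))^[i] 0 = (jump g)^[i] p := by
  induction i with
  | zero => rfl
  | succ i ih =>
    rw [Function.iterate_succ_apply', Function.iterate_succ_apply', ← ih]
    exact (Nat.add_assoc _ _ _).symm

theorem natRec_eq_iterate_jump (g : ℕ → ℕ) (K n : ℕ) :
    (Nat.rec 0 (fun _ Pn => Pn + (fun k => k + g (Pn + k))^[K] 0) n : ℕ) = (jump g)^[K * n] 0 := by
  induction n with
  | zero => rfl
  | succ n ih =>
    change _ + _ = _
    rw [ih, add_iterate_eq_iterate_jump, ← Function.iterate_add_apply, Nat.mul_succ, Nat.add_comm]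

def IsStableOn (x : ℕ → ℝ) (ε : ℝ) (a b : ℕ) : Prop :=
  ∀ i, a ≤ i → i ≤ b → ∀ j, a ≤ j → j ≤ b → |x i - x j| ≤ ε

theorem isStableOn_const_sub_iff {x : ℕ → ℝ} {c ε : ℝ} {a b : ℕ} :
    IsStableOn (fun n => c - x n) ε a b ↔ IsStableOn x ε a b := by
  simp only [IsStableOn, sub_sub_sub_cancel_left, abs_sub_comm]

theorem isStableOn_of_monotoneOn {y : ℕ → ℝ} {ε : ℝ} {a b : ℕ} (hy : MonotoneOn y (Icc a b))
    (hab : y b - y a ≤ ε) : IsStableOn y ε a b := by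
  have lower : ∀ i, a ≤ i → i ≤ b → y a ≤ y i := fun i hai hib =>
    hy ⟨le_rfl, hai.trans hib⟩ ⟨hai, hib⟩ hai
  have upper : ∀ i, a ≤ i → i ≤ b → y i ≤ y b := fun i hai hib =>
    hy ⟨hai, hib⟩ ⟨hai.trans hib, le_rfl⟩ hib
  intro i hai hib j haj hjb
  rw [abs_sub_le_iff]
  constructor <;> linarith [lower i hai hib, upper i hai hib, lower j haj hjb, upper j haj hjb]

theorem exists_isStableOn_of_monotoneOn {y : ℕ → ℝ} {g : ℕ → ℕ} {ε : ℝ} {K p : ℕ} (hK : 0 < K)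
    (hy : MonotoneOn y (Icc p ((jump g)^[K] p))) (hyK : y ((jump g)^[K] p) - y p ≤ K * ε) :
    ∃ i < K, IsStableOn y ε ((jump g)^[i] p) ((jump g)^[i] p + g ((jump g)^[i] p)) := by
  have hsum : ∑ i ∈ Finset.range K, (y ((jump g)^[i + 1] p) - y ((jump g)^[i] p)) ≤
      ∑ _i ∈ Finset.range K, ε := by
    rw [Finset.sum_range_sub (fun i => y ((jump g)^[i] p)), Finset.sum_const, Finset.card_range,
      nsmul_eq_mul]
    exact hyK
  obtain ⟨i, hi, hle⟩ := Finset.exists_le_of_sum_le (Finset.nonempty_range_iff.2 hK.ne') hsum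
  have hiK := Finset.mem_range.1 hi
  refine ⟨i, hiK, ?_⟩
  rw [iterate_jump_succ]
  refine isStableOn_of_monotoneOn (hy.mono (Icc_subset_Icc ?_ ?_)) hle
  · exact monotone_iterate_jump g p (Nat.zero_le i)
  · exact monotone_iterate_jump g p hiK

theorem forall_nonneg_or_forall_nonpos_of_mul_pos {d : ℕ → ℝ} {a b : ℕ}
    (h : ∀ n ∈ Ico a b, 0 < d n * d (n + 1)) :
    (∀ n ∈ Ico a b, 0 ≤ d n) ∨ (∀ n ∈ Ico a b, d n ≤ 0) := by
  have hsign : ∀ n ∈ Ico a b, 0 < d a * d n := by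
    rintro n ⟨han, hnb⟩
    induction n, han using Nat.le_induction with
    | base => exact mul_self_pos.2 (left_ne_zero_of_mul (h a ⟨le_rfl, hnb⟩).ne')
    | succ n hn ih =>
      nlinarith [mul_pos (ih (by omega)) (h n ⟨hn, by omega⟩), sq_nonneg (d n)]
  rcases le_total 0 (d a) with ha | ha
  · exact Or.inl fun n hn => (pos_of_mul_pos_right (hsign n hn) ha).le
  · exact Or.inr fun n hn => (neg_of_mul_pos_right (hsign n hn) ha).le

/-- Each step moves `x n` towards `E (x n)` without passing it (a Krasnoselskii–Mann iteration of
`E` with parameters in `[0, 1]`), and `E` decreases at rate at most `q` on `[0, 1]`. -/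
structure IsRelaxedIteration (E : ℝ → ℝ) (q : ℝ) (x : ℕ → ℝ) : Prop where
  q_mem : q ∈ Icc (0 : ℝ) 1
  monotoneOn : MonotoneOn (fun w => E w + q * w) (Icc 0 1)
  mem : ∀ n, x n ∈ Icc (0 : ℝ) 1
  step_mem : ∀ n, x (n + 1) ∈ uIcc (x n) (E (x n))

namespace IsRelaxedIteration

variable {E : ℝ → ℝ} {q ε : ℝ} {x : ℕ → ℝ}

theorem reflect (h : IsRelaxedIteration E q x) :
    IsRelaxedIteration (fun y => 1 - E (1 - y)) q (fun n => 1 - x n) where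
  q_mem := h.q_mem
  monotoneOn a ha b hb hab := by
    have := h.monotoneOn ⟨sub_nonneg.2 hb.2, by linarith [hb.1]⟩
      ⟨sub_nonneg.2 ha.2, by linarith [ha.1]⟩ (sub_le_sub_left hab 1)
    dsimp only at this ⊢
    linarith
  mem n := ⟨sub_nonneg.2 (h.mem n).2, by linarith [(h.mem n).1]⟩
  step_mem n := by
    simp only [sub_sub_cancel]
    rcases mem_uIcc.1 (h.step_mem n) with ⟨h1, h2⟩ | ⟨h1, h2⟩
    · exact mem_uIcc.2 (Or.inr ⟨by linarith, by linarith⟩)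
    · exact mem_uIcc.2 (Or.inl ⟨by linarith, by linarith⟩)

theorem mem_Icc_of_le_map (h : IsRelaxedIteration E q x) {n : ℕ} (hn : x n ≤ E (x n)) :
    x (n + 1) ∈ Icc (x n) (E (x n)) :=
  uIcc_of_le hn ▸ h.step_mem n

theorem mem_Icc_of_map_le (h : IsRelaxedIteration E q x) {n : ℕ} (hn : E (x n) ≤ x n) :
    x (n + 1) ∈ Icc (E (x n)) (x n) :=
  uIcc_of_ge hn ▸ h.step_mem n

theorem map_le_map_add (h : IsRelaxedIteration E q x) {w v : ℝ} (hw : 0 ≤ w) (hwv : w ≤ v)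
    (hv : v ≤ 1) : E w ≤ E v + q * (v - w) := by
  have := h.monotoneOn ⟨hw, hwv.trans hv⟩ ⟨hw.trans hwv, hv⟩ hwv
  dsimp only at this
  linarith

theorem monotoneOn_of_forall_le_map (h : IsRelaxedIteration E q x) {a b : ℕ}
    (hup : ∀ n ∈ Ico a b, x n ≤ E (x n)) : MonotoneOn x (Icc a b) :=
  monotoneOn_of_le_add_one ordConnected_Icc fun n _ hn hn1 =>
    (h.mem_Icc_of_le_map (hup n ⟨hn.1, hn1.2⟩)).1

theorem tail_mem_Icc (h : IsRelaxedIteration E q x) {n : ℕ} (hn : E (x n) ≤ x n)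
    (hn1 : x (n + 1) ≤ E (x (n + 1))) {m : ℕ} (hm : n + 1 ≤ m) :
    x m ∈ Icc (x (n + 1)) (x (n + 1) + q * (x n - x (n + 1))) := by
  obtain ⟨hq0, hq1⟩ := h.q_mem
  obtain ⟨hovershoot, hdrop⟩ := h.mem_Icc_of_map_le hn
  have hlo : 0 ≤ x (n + 1) := (h.mem (n + 1)).1
  -- invariant: `x m` is at most the extreme step `E w` from some `w` of the tail below it
  suffices key : x m ≤ x (n + 1) + q * (x n - x (n + 1)) ∧
      ∃ w ∈ Icc (x (n + 1)) (x m), x m ≤ E w by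
    obtain ⟨hhi, w, hw, -⟩ := key
    exact ⟨hw.1.trans hw.2, hhi⟩
  induction m, hm using Nat.le_induction with
  | base => exact ⟨by nlinarith, x (n + 1), ⟨le_rfl, le_rfl⟩, hn1⟩
  | succ m hm ih =>
    obtain ⟨hhi, w, ⟨hw, hwm⟩, hmw⟩ := ih
    have hm1 : x m ≤ 1 := (h.mem m).2
    rcases le_total (x m) (E (x m)) with hup | hdown
    · obtain ⟨hm_le, hle_E⟩ := h.mem_Icc_of_le_map hup
      have hmn : x m ≤ x n := by nlinarith
      have := h.map_le_map_add (hlo.trans (hw.trans hwm)) hmn (h.mem n).2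
      refine ⟨by nlinarith [mul_nonneg hq0 (sub_nonneg.2 (hw.trans hwm))], x m, ⟨hw.trans hwm, hm_le⟩, hle_E⟩
    · obtain ⟨hE_le, hle_m⟩ := h.mem_Icc_of_map_le hdown
      have := h.map_le_map_add (hlo.trans hw) hwm hm1
      exact ⟨hle_m.trans hhi, w, ⟨hw, by nlinarith⟩, hle_m.trans hmw⟩

theorem abs_sub_le_of_map_le_of_le_map (h : IsRelaxedIteration E q x) {n : ℕ}
    (hn : E (x n) ≤ x n) (hn1 : x (n + 1) ≤ E (x (n + 1))) {i j : ℕ} (hi : n + 1 ≤ i)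
    (hj : n + 1 ≤ j) : |x i - x j| ≤ q * |x (n + 1) - x n| := by
  have hi' := h.tail_mem_Icc hn hn1 hi
  have hj' := h.tail_mem_Icc hn hn1 hj
  rw [abs_sub_comm (x (n + 1)), abs_of_nonneg (sub_nonneg.2 (h.mem_Icc_of_map_le hn).2)]
  exact abs_sub_le_iff.2 ⟨by linarith [hi'.2, hj'.1], by linarith [hi'.1, hj'.2]⟩

theorem abs_sub_le_of_mul_nonpos (h : IsRelaxedIteration E q x) {n : ℕ}
    (hn : (E (x n) - x n) * (E (x (n + 1)) - x (n + 1)) ≤ 0) {i j : ℕ} (hi : n + 1 ≤ i)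
    (hj : n + 1 ≤ j) : |x i - x j| ≤ q * |x (n + 1) - x n| := by
  rcases mul_nonpos_iff.1 hn with ⟨hup, hdown⟩ | ⟨hdown, hup⟩
  · have := h.reflect.abs_sub_le_of_map_le_of_le_map (n := n)
      (by simp only [sub_sub_cancel]; linarith) (by simp only [sub_sub_cancel]; linarith) hi hj
    simpa only [sub_sub_sub_cancel_left, abs_sub_comm] using this
  · exact h.abs_sub_le_of_map_le_of_le_map (sub_nonpos.1 hdown) (sub_nonneg.1 hup) hi hj

theorem abs_sub_le_pow (h : IsRelaxedIteration E q x) {P : ℕ → ℕ} {T : ℕ}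
    (hP : ∀ k < T, ∃ n ∈ Ico (P k) (P (k + 1)),
      (E (x n) - x n) * (E (x (n + 1)) - x (n + 1)) ≤ 0) :
    ∀ k ≤ T, ∀ i j, P k ≤ i → P k ≤ j → |x i - x j| ≤ q ^ k := by
  intro k hk
  induction k with
  | zero =>
    intro i j _ _
    rw [pow_zero, abs_sub_le_iff]
    constructor <;> linarith [(h.mem i).1, (h.mem i).2, (h.mem j).1, (h.mem j).2]
  | succ k ih =>
    intro i j hi hj
    obtain ⟨n, ⟨hkn, hnk⟩, hchange⟩ := hP k hk
    calc |x i - x j| ≤ q * |x (n + 1) - x n| :=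
          h.abs_sub_le_of_mul_nonpos hchange (by omega) (by omega)
      _ ≤ q * q ^ k := mul_le_mul_of_nonneg_left (ih (by omega) _ _ (by omega) hkn) h.q_mem.1
      _ = q ^ (k + 1) := (pow_succ' q k).symm

theorem exists_isStableOn_of_forall_le_map (h : IsRelaxedIteration E q x) {g : ℕ → ℕ} {K p : ℕ}
    (hK : 1 ≤ K * ε) (hup : ∀ n ∈ Ico p ((jump g)^[K] p), x n ≤ E (x n)) :
    ∃ i < K, IsStableOn x ε ((jump g)^[i] p) ((jump g)^[i] p + g ((jump g)^[i] p)) :=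
  exists_isStableOn_of_monotoneOn (Nat.pos_of_ne_zero (by rintro rfl; norm_num at hK))
    (h.monotoneOn_of_forall_le_map hup)
    (by linarith [(h.mem p).1, (h.mem ((jump g)^[K] p)).2])

theorem exists_isStableOn_of_forall_mul_pos (h : IsRelaxedIteration E q x) {g : ℕ → ℕ}
    {K p : ℕ} (hK : 1 ≤ K * ε)
    (hpos : ∀ n ∈ Ico p ((jump g)^[K] p), 0 < (E (x n) - x n) * (E (x (n + 1)) - x (n + 1))) :
    ∃ i < K, IsStableOn x ε ((jump g)^[i] p) ((jump g)^[i] p + g ((jump g)^[i] p)) := by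
  rcases forall_nonneg_or_forall_nonpos_of_mul_pos hpos with hup | hdown
  · exact h.exists_isStableOn_of_forall_le_map hK fun n hn => sub_nonneg.1 (hup n hn)
  · obtain ⟨i, hi, hstable⟩ := h.reflect.exists_isStableOn_of_forall_le_map hK
      fun n hn => by simp only [sub_sub_cancel]; linarith [hdown n hn]
    exact ⟨i, hi, isStableOn_const_sub_iff.1 hstable⟩

theorem exists_isStableOn (h : IsRelaxedIteration E q x) (g : ℕ → ℕ) {K T : ℕ}
    (hK : 1 ≤ K * ε) (hT : q ^ T ≤ ε) :
    ∃ N ≤ (jump g)^[K * T] 0, IsStableOn x ε N (N + g N) := by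
  by_cases hchange : ∀ k < T, ∃ n ∈ Ico ((jump g)^[K * k] 0) ((jump g)^[K * (k + 1)] 0),
      (E (x n) - x n) * (E (x (n + 1)) - x (n + 1)) ≤ 0
  · exact ⟨_, le_rfl, fun i hi _ j hj _ => (h.abs_sub_le_pow hchange T le_rfl i j hi hj).trans hT⟩
  · push Not at hchange
    obtain ⟨k, hk, hpos⟩ := hchange
    rw [Nat.mul_succ, Nat.add_comm, Function.iterate_add_apply] at hpos
    obtain ⟨i, hi, hstable⟩ := h.exists_isStableOn_of_forall_mul_pos hK hpos
    refine ⟨_, ?_, hstable⟩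
    rw [← Function.iterate_add_apply]
    exact monotone_iterate_jump g 0 (by nlinarith)

end IsRelaxedIteration

theorem monotoneOn_mul_add_of_abs_sub_le {f : ℝ → ℝ} {L : ℝ} {s : Set ℝ}
    (hlip : ∀ a ∈ s, ∀ b ∈ s, |f a - f b| ≤ L * |a - b|) :
    MonotoneOn (fun w => L * w + f w) s := by
  intro a ha b hb hab
  have := (le_abs_self _).trans (hlip a ha b hb)
  rw [abs_of_nonpos (sub_nonpos.2 hab)] at this
  dsimp only
  linarith

theorem add_mul_mem_uIcc {a c s τ : ℝ} (hs : 0 ≤ s) (hsτ : s ≤ τ) :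
    a + s * c ∈ uIcc a (a + τ * c) := by
  rcases le_total 0 c with hc | hc
  · rw [uIcc_of_le (by nlinarith)]
    exact ⟨by nlinarith, by nlinarith⟩
  · rw [uIcc_of_ge (by nlinarith)]
    exact ⟨by nlinarith, by nlinarith⟩

theorem isRelaxedIteration_of_lipschitz {L δ : ℝ} {f : ℝ → ℝ} {t x : ℕ → ℝ} (hL : 0 < L + 1)
    (hδ : δ ∈ Icc (0 : ℝ) 1)
    (hlip : ∀ a ∈ Icc (0 : ℝ) 1, ∀ b ∈ Icc (0 : ℝ) 1, |f a - f b| ≤ L * |a - b|)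
    (hx : ∀ n, x n ∈ Icc (0 : ℝ) 1) (hiter : ∀ n, x (n + 1) = (1 - t n) * x n + t n * f (x n))
    (ht : ∀ n, 0 ≤ t n) (htδ : ∀ n, t n ≤ (2 - δ) / (L + 1)) :
    IsRelaxedIteration (fun w => w + (2 - δ) / (L + 1) * (f w - w)) (1 - δ) x where
  q_mem := ⟨sub_nonneg.2 hδ.2, by linarith [hδ.1]⟩
  monotoneOn a ha b hb hab := by
    have hcomb : ∀ w, w + (2 - δ) / (L + 1) * (f w - w) + (1 - δ) * w =
        (2 - δ) / (L + 1) * (L * w + f w) := fun w => by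
      field_simp
      ring
    simp only [hcomb]
    exact mul_le_mul_of_nonneg_left (monotoneOn_mul_add_of_abs_sub_le hlip ha hb hab)
      (div_nonneg (by linarith [hδ.2]) hL.le)
  mem := hx
  step_mem n := by
    rw [hiter n, show (1 - t n) * x n + t n * f (x n) = x n + t n * (f (x n) - x n) by ring]
    exact add_mul_mem_uIcc (ht n) (htδ n)

theorem pow_toNat_ceil_logb_add_one_le {q b ε : ℝ} (hq : 0 ≤ q) (hqb : q ≤ b) (hb0 : 0 < b)
    (hb1 : b < 1) (hε : 0 < ε) : q ^ (⌈Real.logb b ε⌉ + 1).toNat ≤ ε := by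
  set T := (⌈Real.logb b ε⌉ + 1).toNat
  have hT : Real.logb b ε ≤ T := by
    have hceil := Int.le_ceil (Real.logb b ε)
    have hcast : ((⌈Real.logb b ε⌉ + 1 : ℤ) : ℝ) ≤ (T : ℝ) := by
      exact_mod_cast Int.self_le_toNat _
    push_cast at hcast
    linarith
  calc q ^ T ≤ b ^ T := pow_le_pow_left₀ hq hqb T
    _ = b ^ (T : ℝ) := (Real.rpow_natCast b T).symm
    _ ≤ b ^ Real.logb b ε := Real.rpow_le_rpow_of_exponent_ge hb0 hb1.le hT
    _ = ε := Real.rpow_logb hb0 hb1.ne hε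

theorem metastability_KM_lipschitz_general
    (L : ℝ) (hL : 0 < L) (f : ℝ → ℝ)
    (hlip : ∀ a ∈ Set.Icc (0:ℝ) 1, ∀ b ∈ Set.Icc (0:ℝ) 1, |f a - f b| ≤ L * |a - b|)
    (t x : ℕ → ℝ) (ht : ∀ n, t n ∈ Set.Icc (0:ℝ) 1) (hx : ∀ n, x n ∈ Set.Icc (0:ℝ) 1)
    (hiter : ∀ n, x (n+1) = (1 - t n) * x n + t n * f (x n))
    (δ : ℝ) (hδ : δ ∈ Set.Ioo (0:ℝ) 1) (htδ : ∀ n, t n ≤ (2 - δ)/(L + 1))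
    (ε : ℝ) (hε : 0 < ε) (g : ℕ → ℕ) :
    ∃ N, (N ≤
      (let P : ℕ → ℕ := fun n =>
         Nat.rec 0 (fun _ Pn => Pn + (fun k => k + g (Pn + k))^[⌈1/ε⌉₊ + 1] 0) n
       let T : ℕ := (⌈Real.logb (1 - δ/2) ε⌉ + 1).toNat
       let B : ℕ := T + (P T + g (P T)) + 1
       P B)) ∧
      ∀ i, N ≤ i → i ≤ N + g N → ∀ j, N ≤ j → j ≤ N + g N → |x i - x j| ≤ ε := by
  obtain ⟨hδ0, hδ1⟩ := hδ
  have hK : 1 ≤ ((⌈1/ε⌉₊ + 1 : ℕ) : ℝ) * ε := by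
    have := Nat.le_ceil (1 / ε)
    push_cast
    calc (1 : ℝ) = 1 / ε * ε := (div_mul_cancel₀ 1 hε.ne').symm
      _ ≤ (⌈1/ε⌉₊ + 1) * ε := by gcongr; linarith
  have hT : (1 - δ) ^ (⌈Real.logb (1 - δ/2) ε⌉ + 1).toNat ≤ ε :=
    pow_toNat_ceil_logb_add_one_le (by linarith) (by linarith) (by linarith) (by linarith) hε
  have hKM := isRelaxedIteration_of_lipschitz (by linarith) ⟨hδ0.le, hδ1.le⟩ hlip hx hiter
    (fun n => (ht n).1) htδ
  obtain ⟨N, hNle, hN⟩ := hKM.exists_isStableOn g hK hT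
  refine ⟨N, ?_, hN⟩
  simp -iota only [natRec_eq_iterate_jump]
  refine hNle.trans (monotone_iterate_jump g 0 ?_)
  exact Nat.mul_le_mul_left _ (by omega)

theorem metastability_KM_lipschitz
    (L : ℝ) (hL : 0 < L) (f : ℝ → ℝ)
    (hf : ∀ a ∈ Set.Icc (0:ℝ) 1, f a ∈ Set.Icc (0:ℝ) 1)
    (hlip : ∀ a ∈ Set.Icc (0:ℝ) 1, ∀ b ∈ Set.Icc (0:ℝ) 1, |f a - f b| ≤ L * |a - b|)
    (t x : ℕ → ℝ) (ht : ∀ n, t n ∈ Set.Icc (0:ℝ) 1) (hx : ∀ n, x n ∈ Set.Icc (0:ℝ) 1)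
    (hiter : ∀ n, x (n+1) = (1 - t n) * x n + t n * f (x n))
    (δ : ℝ) (hδ : δ ∈ Set.Ioo (0:ℝ) 1) (htδ : ∀ n, t n ≤ (2 - δ)/(L + 1))
    (ε : ℝ) (hε : 0 < ε) (g : ℕ → ℕ) :
    ∃ N, (N ≤
      (let P : ℕ → ℕ := fun n =>
         Nat.rec 0 (fun _ Pn => Pn + (fun k => k + g (Pn + k))^[⌈1/ε⌉₊ + 1] 0) n
       let T : ℕ := (⌈Real.logb (1 - δ/2) ε⌉ + 1).toNat
       let B : ℕ := T + (P T + g (P T)) + 1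
       P B)) ∧
      ∀ i, N ≤ i → i ≤ N + g N → ∀ j, N ≤ j → j ≤ N + g N → |x i - x j| ≤ ε :=
  metastability_KM_lipschitz_general L hL f hlip t x ht hx hiter δ hδ htδ ε hε g
end
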